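/- arXiv:2103.12263 — 7 statements merged into one kernel-verified Lean document; each statement's English description precedes it below -/
import Mathlib

section
/- Let f : ℝ≥0 × ℝⁿ → ℝⁿ be continuous in (t,x) with f(t,x*) = 0 for all t ≥ 0, and let C ⊆ ℝⁿ be open, convex, and forward invariant with x* ∈ C. Let ‖·‖ be a norm on ℝⁿ with induced matrix measure μ. If there exists a continuous map (t,x) ↦ A(t,x) ∈ ℝⁿˣⁿ such that f(t,x) = A(t,x)(x − x*) for all t, x and μ(A(t,x)) ≤ b for all t, x, then every solution satisfies D⁺‖φ(t,t₀,x₀) − x*‖ ≤ b‖φ(t,t₀,x₀) − x*‖ for all x₀ ∈ C, 0 ≤ t₀ ≤ t, and consequently ‖φ(t,t₀,x₀) − x*‖ ≤ e^{b(t−s)}‖φ(s,t₀,x₀) − x*‖ for all 0 ≤ t₀ ≤ s ≤ t. -/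
open Filter Topology MeasureTheory

/-- The upper right Dini derivative `D⁺φ(t) = limsup_{h→0⁺} (φ(t+h)−φ(t))/h`. -/
noncomputable def DiniUpper (φ : ℝ → ℝ) (t : ℝ) : ℝ :=
  Filter.limsup (fun h : ℝ => (φ (t + h) - φ t) / h) (nhdsWithin 0 (Set.Ioi 0))

/-- `ν` is a norm on `ℝⁿ`. -/
structure IsNorm {n : ℕ} (ν : (Fin n → ℝ) → ℝ) : Prop where
  pos : ∀ x, x ≠ 0 → 0 < ν x
  homog : ∀ (a : ℝ) (x : Fin n → ℝ), ν (a • x) = |a| * ν x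
  triangle : ∀ x y, ν (x + y) ≤ ν x + ν y

/-- `P` is a weak pairing on `ℝⁿ`. -/
structure IsWeakPairing {n : ℕ} (P : (Fin n → ℝ) → (Fin n → ℝ) → ℝ) : Prop where
  subadd : ∀ x₁ x₂ y, P (x₁ + x₂) y ≤ P x₁ y + P x₂ y
  cont : ∀ y, Continuous fun x => P x y
  homog_left : ∀ (a : ℝ), 0 ≤ a → ∀ x y, P (a • x) y = a * P x y
  homog_right : ∀ (a : ℝ), 0 ≤ a → ∀ x y, P x (a • y) = a * P x y
  neg_neg : ∀ x y, P (-x) (-y) = P x y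
  posdef : ∀ x, x ≠ 0 → 0 < P x x
  cauchySchwarz : ∀ x y, |P x y| ≤ Real.sqrt (P x x) * Real.sqrt (P y y)

/-- A weak pairing `P` is compatible with the norm `ν`. -/
def Compatible {n : ℕ} (ν : (Fin n → ℝ) → ℝ)
    (P : (Fin n → ℝ) → (Fin n → ℝ) → ℝ) : Prop :=
  ∀ x, P x x = (ν x) ^ 2

/-- Deimling's inequality: `⟦x,y⟧ ≤ ‖y‖ · lim_{h→0⁺}(‖y+hx‖−‖y‖)/h`
(the one-sided limit exists for every norm). -/
def DeimlingIneq {n : ℕ} (ν : (Fin n → ℝ) → ℝ)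
    (P : (Fin n → ℝ) → (Fin n → ℝ) → ℝ) : Prop :=
  ∀ x y L, Filter.Tendsto (fun h : ℝ => (ν (y + h • x) - ν y) / h)
      (nhdsWithin 0 (Set.Ioi 0)) (nhds L) → P x y ≤ ν y * L

/-- The curve norm derivative formula: for any differentiable curve,
`‖x(t)‖ D⁺‖x(t)‖ = ⟦ẋ(t), x(t)⟧` for a.e. `t`. -/
def CurveNormDerivFormula {n : ℕ} (ν : (Fin n → ℝ) → ℝ)
    (P : (Fin n → ℝ) → (Fin n → ℝ) → ℝ) : Prop :=
  ∀ (a b : ℝ) (x x' : ℝ → Fin n → ℝ),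
    (∀ t ∈ Set.Ioo a b, HasDerivAt x (x' t) t) →
    ∀ᵐ t ∂(volume : Measure ℝ), t ∈ Set.Ioo a b →
      ν (x t) * DiniUpper (fun s => ν (x s)) t = P (x' t) (x t)

/-- The operator norm on matrices induced by the norm `ν` on `ℝⁿ`. -/
noncomputable def opNorm {n : ℕ} (ν : (Fin n → ℝ) → ℝ)
    (A : Matrix (Fin n) (Fin n) ℝ) : ℝ :=
  sSup ((fun x => ν (A.mulVec x)) '' {x | ν x = 1})

/-- `m` is the matrix measure of `A` induced by `ν`:
`m = lim_{h→0⁺} (‖I + hA‖ − 1)/h`. -/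
def HasMatrixMeasure {n : ℕ} (ν : (Fin n → ℝ) → ℝ)
    (A : Matrix (Fin n) (Fin n) ℝ) (m : ℝ) : Prop :=
  Filter.Tendsto
    (fun h : ℝ => (opNorm ν ((1 : Matrix (Fin n) (Fin n) ℝ) + h • A) - 1) / h)
    (nhdsWithin 0 (Set.Ioi 0)) (nhds m)


section Aux
variable {n : ℕ} {ν : (Fin n → ℝ) → ℝ}

lemma IsNorm.zero' (hν : IsNorm ν) : ν 0 = 0 := by
  have := hν.homog 0 0; simpa using this

lemma IsNorm.nonneg (hν : IsNorm ν) (x : Fin n → ℝ) : 0 ≤ ν x := by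
  by_cases hx : x = 0
  · simp [hx, hν.zero']
  · exact (hν.pos x hx).le

lemma IsNorm.sum_le (hν : IsNorm ν) {ι : Type*} (s : Finset ι) (g : ι → Fin n → ℝ) :
    ν (∑ i ∈ s, g i) ≤ ∑ i ∈ s, ν (g i) := by
  classical
  induction s using Finset.induction_on with
  | empty => simp [hν.zero']
  | insert _ _ h ih =>
      rw [Finset.sum_insert h, Finset.sum_insert h]
      exact (hν.triangle _ _).trans (by linarith)

lemma IsNorm.upper (hν : IsNorm ν) :
    ∃ K : ℝ, 0 ≤ K ∧ ∀ x, ν x ≤ K * ‖x‖ := by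
  set e : Fin n → (Fin n → ℝ) := fun i => Pi.single i 1 with he
  refine ⟨∑ i, ν (e i), Finset.sum_nonneg fun i _ => hν.nonneg _, fun x => ?_⟩
  have hx : x = ∑ i, (x i) • (e i) := by
    funext j
    simp [he, Finset.sum_apply, Pi.single_apply, mul_comm]
  calc ν x = ν (∑ i, (x i) • (e i)) := by rw [← hx]
    _ ≤ ∑ i, ν ((x i) • (e i)) := hν.sum_le _ _
    _ = ∑ i, |x i| * ν (e i) := Finset.sum_congr rfl fun i _ => hν.homog _ _
    _ ≤ ∑ i, ‖x‖ * ν (e i) := by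
        refine Finset.sum_le_sum fun i _ => ?_
        exact mul_le_mul_of_nonneg_right (by simpa using norm_le_pi_norm x i) (hν.nonneg _)
    _ = (∑ i, ν (e i)) * ‖x‖ := by rw [← Finset.mul_sum, mul_comm]

lemma IsNorm.continuous (hν : IsNorm ν) : Continuous ν := by
  obtain ⟨K, hK0, hK⟩ := hν.upper
  rw [Metric.continuous_iff]
  intro x ε hε
  by_cases hKz : K = 0
  · exact ⟨1, one_pos, fun y _ => by
      have h1 : ν y ≤ 0 := by simpa [hKz] using hK y
      have h2 : ν x ≤ 0 := by simpa [hKz] using hK x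
      have := hν.nonneg y; have := hν.nonneg x
      simp only [Real.dist_eq]
      have : ν y = 0 := le_antisymm h1 (hν.nonneg y)
      have hx0 : ν x = 0 := le_antisymm h2 (hν.nonneg x)
      simp [this, hx0, hε]⟩
  · have hKpos : 0 < K := lt_of_le_of_ne hK0 (Ne.symm hKz)
    refine ⟨ε / K, by positivity, fun y hy => ?_⟩
    have key : ∀ a b : Fin n → ℝ, ν a - ν b ≤ K * ‖a - b‖ := by
      intro a b
      have := hν.triangle (a - b) b
      simp only [sub_add_cancel] at this
      linarith [hK (a - b)]
    have h1 := key y x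
    have h2 := key x y
    rw [Real.dist_eq, abs_sub_lt_iff]
    rw [dist_eq_norm] at hy
    have : ‖x - y‖ = ‖y - x‖ := by rw [norm_sub_rev]
    have hmul : K * ‖y - x‖ < K * (ε / K) := mul_lt_mul_of_pos_left hy hKpos
    have hKε : K * (ε / K) = ε := by field_simp
    rw [this] at h2
    constructor <;> linarith

lemma IsNorm.lower (hν : IsNorm ν) (w : Fin n → ℝ) (hw : w ≠ 0) :
    ∃ c : ℝ, 0 < c ∧ ∀ x, c * ‖x‖ ≤ ν x := by
  haveI : Nontrivial (Fin n → ℝ) := ⟨w, 0, hw⟩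
  have hsph : (Metric.sphere (0 : Fin n → ℝ) 1).Nonempty :=
    NormedSpace.sphere_nonempty.2 zero_le_one
  obtain ⟨x₀, hx₀S, hx₀min⟩ :=
    (isCompact_sphere (0 : Fin n → ℝ) 1).exists_isMinOn hsph hν.continuous.continuousOn
  have hx₀n : ‖x₀‖ = 1 := by simpa using hx₀S
  have hx₀0 : x₀ ≠ 0 := by intro h; rw [h] at hx₀n; simp at hx₀n
  refine ⟨ν x₀, hν.pos _ hx₀0, fun x => ?_⟩
  by_cases hx : x = 0
  · simp [hx, hν.zero']
  · have hxn : ‖x‖ ≠ 0 := norm_ne_zero_iff.2 hx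
    have hu : (‖x‖⁻¹ • x) ∈ Metric.sphere (0 : Fin n → ℝ) 1 := by
      simp [norm_smul, abs_of_nonneg (inv_nonneg.2 (norm_nonneg x)), inv_mul_cancel₀ hxn]
    have := hx₀min hu
    have heq : ν x = ‖x‖ * ν (‖x‖⁻¹ • x) := by
      rw [hν.homog, abs_of_nonneg (inv_nonneg.2 (norm_nonneg x))]
      field_simp
    rw [heq, mul_comm (ν x₀) ‖x‖]
    exact mul_le_mul_of_nonneg_left this (norm_nonneg x)

lemma IsNorm.sub_le (hν : IsNorm ν) (x y : Fin n → ℝ) : ν x - ν y ≤ ν (x - y) := by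
  have := hν.triangle (x - y) y
  simp only [sub_add_cancel] at this
  linarith

lemma IsNorm.bddAbove_op (hν : IsNorm ν) {c : ℝ} (hc : 0 < c)
    (hlow : ∀ x, c * ‖x‖ ≤ ν x) (B : Matrix (Fin n) (Fin n) ℝ) :
    BddAbove ((fun x => ν (B.mulVec x)) '' {x | ν x = 1}) := by
  have hcl : IsClosed {x : Fin n → ℝ | ν x = 1} :=
    isClosed_eq hν.continuous continuous_const
  have hsub : {x : Fin n → ℝ | ν x = 1} ⊆ Metric.closedBall 0 c⁻¹ := by
    intro x hx
    rw [Metric.mem_closedBall, dist_zero_right]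
    rw [Set.mem_setOf_eq] at hx
    have h1 : c * ‖x‖ ≤ 1 := by rw [← hx]; exact hlow x
    rw [← mul_le_mul_iff_right₀ hc, mul_inv_cancel₀ hc.ne']
    exact h1
  have hK : IsCompact {x : Fin n → ℝ | ν x = 1} :=
    (isCompact_closedBall (0 : Fin n → ℝ) c⁻¹).of_isClosed_subset hcl hsub
  have hcont : Continuous fun x => ν (B.mulVec x) :=
    hν.continuous.comp (by
      have : Continuous fun x => B.mulVecLin x := B.mulVecLin.continuous_of_finiteDimensional
      simpa [Matrix.mulVecLin_apply] using this)
  exact (hK.image hcont).bddAbove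

lemma opNorm_nonneg (hν : IsNorm ν) (B : Matrix (Fin n) (Fin n) ℝ) : 0 ≤ opNorm ν B :=
  Real.sSup_nonneg (fun y hy => by obtain ⟨x, _, rfl⟩ := hy; exact hν.nonneg _)

lemma le_opNorm (hν : IsNorm ν) {c : ℝ} (hc : 0 < c) (hlow : ∀ x, c * ‖x‖ ≤ ν x)
    (B : Matrix (Fin n) (Fin n) ℝ) (x : Fin n → ℝ) :
    ν (B.mulVec x) ≤ opNorm ν B * ν x := by
  by_cases hx : x = 0
  · simp [hx, Matrix.mulVec_zero, hν.zero', opNorm_nonneg hν B]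
  · have hνx : 0 < ν x := hν.pos x hx
    set u := (ν x)⁻¹ • x with hu
    have hu1 : ν u = 1 := by
      rw [hu, hν.homog, abs_of_nonneg (inv_nonneg.2 hνx.le), inv_mul_cancel₀ hνx.ne']
    have hxu : x = (ν x) • u := by
      rw [hu, smul_smul, mul_inv_cancel₀ hνx.ne', one_smul]
    calc ν (B.mulVec x) = ν (B.mulVec ((ν x) • u)) := by rw [← hxu]
      _ = ν ((ν x) • B.mulVec u) := by rw [Matrix.mulVec_smul]
      _ = ν x * ν (B.mulVec u) := by rw [hν.homog, abs_of_nonneg hνx.le]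
      _ ≤ ν x * opNorm ν B := by
          refine mul_le_mul_of_nonneg_left ?_ hνx.le
          exact le_csSup (hν.bddAbove_op hc hlow B) ⟨u, hu1, rfl⟩
      _ = opNorm ν B * ν x := mul_comm _ _

lemma opNorm_one (hν : IsNorm ν) {c : ℝ} (hc : 0 < c) (hlow : ∀ x, c * ‖x‖ ≤ ν x)
    {u : Fin n → ℝ} (hu : ν u = 1) : opNorm ν (1 : Matrix (Fin n) (Fin n) ℝ) = 1 := by
  apply le_antisymm
  · refine csSup_le ⟨1, u, hu, by simp [Matrix.one_mulVec, hu]⟩ ?_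
    rintro y ⟨x, hx, rfl⟩
    simp only [Matrix.one_mulVec]; exact le_of_eq hx
  · exact le_csSup (hν.bddAbove_op hc hlow _) ⟨u, hu, by simp [Matrix.one_mulVec, hu]⟩

lemma opNorm_combo (hν : IsNorm ν) {c : ℝ} (hc : 0 < c) (hlow : ∀ x, c * ‖x‖ ≤ ν x)
    {u : Fin n → ℝ} (hu : ν u = 1) (M : Matrix (Fin n) (Fin n) ℝ)
    {h₁ h₂ : ℝ} (h1pos : 0 < h₁) (h12 : h₁ ≤ h₂) :
    opNorm ν (1 + h₁ • M) ≤ (h₁ / h₂) * opNorm ν (1 + h₂ • M) + (1 - h₁ / h₂) := by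
  have h2pos : 0 < h₂ := lt_of_lt_of_le h1pos h12
  have hratio : 0 ≤ h₁ / h₂ := by positivity
  have hratio1 : h₁ / h₂ ≤ 1 := div_le_one_of_le₀ h12 h2pos.le
  refine csSup_le ⟨_, u, hu, rfl⟩ ?_
  rintro y ⟨x, hx, rfl⟩
  rw [Set.mem_setOf_eq] at hx
  have hid : (1 + h₁ • M).mulVec x
      = (h₁ / h₂) • ((1 + h₂ • M).mulVec x) + (1 - h₁ / h₂) • x := by
    have hcancel : h₁ / h₂ * h₂ = h₁ := div_mul_cancel₀ _ h2pos.ne'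
    simp only [Matrix.add_mulVec, Matrix.one_mulVec, Matrix.smul_mulVec]
    rw [smul_add, smul_smul, hcancel, sub_smul, one_smul]
    abel
  calc ν ((1 + h₁ • M).mulVec x)
      ≤ ν ((h₁ / h₂) • ((1 + h₂ • M).mulVec x)) + ν ((1 - h₁ / h₂) • x) := by
        rw [hid]; exact hν.triangle _ _
    _ = (h₁ / h₂) * ν ((1 + h₂ • M).mulVec x) + (1 - h₁ / h₂) * ν x := by
        rw [hν.homog, hν.homog, abs_of_nonneg hratio, abs_of_nonneg (by linarith)]
    _ ≤ (h₁ / h₂) * opNorm ν (1 + h₂ • M) + (1 - h₁ / h₂) := by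
        have h1' : ν ((1 + h₂ • M).mulVec x) ≤ opNorm ν (1 + h₂ • M) :=
          le_csSup (hν.bddAbove_op hc hlow _) ⟨x, hx, rfl⟩
        have := mul_le_mul_of_nonneg_left h1' hratio
        rw [hx]
        linarith

lemma exists_matrixMeasure (hν : IsNorm ν) {c : ℝ} (hc : 0 < c)
    (hlow : ∀ x, c * ‖x‖ ≤ ν x) {u : Fin n → ℝ} (hu : ν u = 1)
    (M : Matrix (Fin n) (Fin n) ℝ) : ∃ m, HasMatrixMeasure ν M m := by
  set g : ℝ → ℝ := fun h => (opNorm ν (1 + h • M) - 1) / h with hg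
  have hmono : MonotoneOn g (Set.Ioi (0:ℝ)) := by
    intro h₁ hh₁ h₂ hh₂ h12
    rw [Set.mem_Ioi] at hh₁ hh₂
    have key := opNorm_combo hν hc hlow hu M hh₁ h12
    rw [hg]
    rw [div_le_div_iff₀ hh₁ hh₂]
    have : (h₁ / h₂) * opNorm ν (1 + h₂ • M) + (1 - h₁ / h₂)
        = (h₁ * (opNorm ν (1 + h₂ • M) - 1)) / h₂ + 1 := by
      field_simp; ring
    rw [this] at key
    have := mul_le_mul_of_nonneg_right key hh₂.le
    calc (opNorm ν (1 + h₁ • M) - 1) * h₂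
        ≤ (h₁ * (opNorm ν (1 + h₂ • M) - 1) / h₂ + 1 - 1) * h₂ := by nlinarith
      _ = (opNorm ν (1 + h₂ • M) - 1) * h₁ := by field_simp; ring
  have hbdd : BddBelow (g '' Set.Ioi 0) := by
    refine ⟨-ν (M.mulVec u), ?_⟩
    rintro y ⟨h, hh, rfl⟩
    rw [Set.mem_Ioi] at hh
    have h1 : ν ((1 + h • M).mulVec u) ≤ opNorm ν (1 + h • M) :=
      le_csSup (hν.bddAbove_op hc hlow _) ⟨u, hu, rfl⟩
    have h2 : 1 - h * ν (M.mulVec u) ≤ ν ((1 + h • M).mulVec u) := by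
      have hid : (1 + h • M).mulVec u = u + h • (M.mulVec u) := by
        rw [Matrix.add_mulVec, Matrix.one_mulVec, Matrix.smul_mulVec]
      have := hν.sub_le u (u + h • M.mulVec u)
      have hsmul : ν (u - (u + h • M.mulVec u)) = h * ν (M.mulVec u) := by
        have : u - (u + h • M.mulVec u) = (-h) • M.mulVec u := by
          rw [neg_smul]; abel
        rw [this, hν.homog, abs_neg, abs_of_nonneg hh.le]
      rw [hsmul, hu] at this
      rw [hid]; linarith
    rw [hg]
    have : -(ν (M.mulVec u)) * h ≤ opNorm ν (1 + h • M) - 1 := by linarith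
    calc -ν (M.mulVec u) = (-(ν (M.mulVec u)) * h) / h := by field_simp
      _ ≤ (opNorm ν (1 + h • M) - 1) / h := by gcongr
  exact ⟨_, hmono.tendsto_nhdsGT hbdd⟩

lemma dini_key (hν : IsNorm ν) (b : ℝ) (X : ℝ → Fin n → ℝ) (xstar : Fin n → ℝ)
    (M : Matrix (Fin n) (Fin n) ℝ) (t : ℝ)
    (hX : HasDerivAt X (M.mulVec (X t - xstar)) t)
    (hb : ∀ m, HasMatrixMeasure ν M m → m ≤ b) :
    DiniUpper (fun r => ν (X r - xstar)) t ≤ b * ν (X t - xstar) ∧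
    IsBoundedUnder (· ≤ ·) (nhdsWithin (0:ℝ) (Set.Ioi 0))
      (fun h : ℝ => (ν (X (t + h) - xstar) - ν (X t - xstar)) / h) := by
  set v : Fin n → ℝ := X t - xstar with hv
  set w : Fin n → ℝ := M.mulVec v with hw
  set S : ℝ → (Fin n → ℝ) := fun h => h⁻¹ • (X (t + h) - X t) with hS
  set q : ℝ → ℝ := fun h => (ν (X (t + h) - xstar) - ν v) / h with hq
  -- the slope tends to the derivative
  have hmapt : Tendsto (fun h : ℝ => t + h) (nhdsWithin 0 (Set.Ioi 0)) (nhdsWithin t {t}ᶜ) := by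
    apply tendsto_nhdsWithin_of_tendsto_nhds_of_eventually_within
    · have : Tendsto (fun h : ℝ => t + h) (nhds 0) (nhds (t + 0)) :=
        (continuous_const.add continuous_id).tendsto 0
      rw [add_zero] at this
      exact this.mono_left nhdsWithin_le_nhds
    · filter_upwards [self_mem_nhdsWithin] with h hh
      simp only [Set.mem_compl_iff, Set.mem_singleton_iff, add_eq_left]
      exact ne_of_gt hh
  have hslope := hasDerivAt_iff_tendsto_slope.1 hX
  have hSt : Tendsto S (nhdsWithin 0 (Set.Ioi 0)) (nhds w) := by
    have := hslope.comp hmapt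
    have heq : (slope X t ∘ fun h => t + h) = S := by
      funext h
      simp only [Function.comp_apply, slope_def_module, hS, add_sub_cancel_left]
    rwa [heq] at this
  -- eventually ν (S h) is close to ν w
  have hνS : Tendsto (fun h => ν (S h)) (nhdsWithin 0 (Set.Ioi 0)) (nhds (ν w)) :=
    (hν.continuous.tendsto w).comp hSt
  have hdiff : Tendsto (fun h => ν (S h - w)) (nhdsWithin 0 (Set.Ioi 0)) (nhds 0) := by
    have h1 : Tendsto (fun h => S h - w) (nhdsWithin 0 (Set.Ioi 0)) (nhds (w - w)) :=
      hSt.sub tendsto_const_nhds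
    rw [sub_self] at h1
    have := (hν.continuous.tendsto 0).comp h1
    rwa [hν.zero'] at this
  -- key identity
  have hid : ∀ h : ℝ, 0 < h → X (t + h) - xstar = v + h • S h := by
    intro h hh
    rw [hS]
    simp only [smul_smul, mul_inv_cancel₀ (ne_of_gt hh), one_smul]
    rw [hv]; abel
  -- upper bound on q
  have hub : ∀ h : ℝ, 0 < h → q h ≤ ν (S h) := by
    intro h hh
    have h1 : ν (X (t + h) - xstar) - ν v ≤ ν (h • S h) := by
      have := hν.sub_le (X (t + h) - xstar) v
      have h2 : X (t + h) - xstar - v = h • S h := by rw [hid h hh]; abel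
      rwa [h2] at this
    rw [hν.homog, abs_of_nonneg hh.le] at h1
    rw [hq]
    rw [div_le_iff₀ hh]
    linarith [h1]
  have hlb : ∀ h : ℝ, 0 < h → -ν (S h) ≤ q h := by
    intro h hh
    have h1 : ν v - ν (X (t + h) - xstar) ≤ ν (v - (X (t + h) - xstar)) :=
      hν.sub_le _ _
    have h2 : v - (X (t + h) - xstar) = (-h) • S h := by
      rw [hid h hh, neg_smul]; abel
    rw [h2, hν.homog, abs_neg, abs_of_nonneg hh.le] at h1
    rw [hq, le_div_iff₀ hh]
    have : -ν (S h) * h = -(h * ν (S h)) := by ring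
    rw [this]
    linarith
  have hevub : ∀ᶠ h in nhdsWithin (0:ℝ) (Set.Ioi 0), q h ≤ ν w + 1 := by
    have hev : ∀ᶠ h in nhdsWithin (0:ℝ) (Set.Ioi 0), ν (S h) < ν w + 1 :=
      hνS.eventually_lt_const (by linarith)
    filter_upwards [hev, self_mem_nhdsWithin] with h h1 h2
    exact (hub h h2).trans h1.le
  have hbdd : IsBoundedUnder (· ≤ ·) (nhdsWithin (0:ℝ) (Set.Ioi 0)) q :=
    ⟨ν w + 1, eventually_map.2 hevub⟩
  have hevlb : ∀ᶠ h in nhdsWithin (0:ℝ) (Set.Ioi 0), -(ν w + 1) ≤ q h := by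
    have hev : ∀ᶠ h in nhdsWithin (0:ℝ) (Set.Ioi 0), ν (S h) < ν w + 1 :=
      hνS.eventually_lt_const (by linarith)
    filter_upwards [hev, self_mem_nhdsWithin] with h h1 h2
    have := hlb h h2
    linarith
  have hcob : IsCoboundedUnder (· ≤ ·) (nhdsWithin (0:ℝ) (Set.Ioi 0)) q :=
    IsBoundedUnder.isCoboundedUnder_le ⟨-(ν w + 1), eventually_map.2 hevlb⟩
  have hDeq : DiniUpper (fun r => ν (X r - xstar)) t
      = limsup q (nhdsWithin (0:ℝ) (Set.Ioi 0)) := rfl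
  refine ⟨?_, hbdd⟩
  by_cases hv0 : v = 0
  · -- equilibrium case
    have hw0 : ν w = 0 := by rw [hw, hv0, Matrix.mulVec_zero, hν.zero']
    have hq0 : ∀ᶠ h in nhdsWithin (0:ℝ) (Set.Ioi 0), q h = ν (S h) := by
      filter_upwards [self_mem_nhdsWithin] with h hh
      have hh' : (0:ℝ) < h := hh
      show (ν (X (t + h) - xstar) - ν v) / h = ν (S h)
      rw [hid h hh', hv0, zero_add, hν.homog, abs_of_nonneg hh'.le, hν.zero']
      field_simp
      ring
    have heq : (fun h => ν (S h)) =ᶠ[nhdsWithin (0:ℝ) (Set.Ioi 0)] q :=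
      hq0.mono fun h hh => hh.symm
    have : Tendsto q (nhdsWithin (0:ℝ) (Set.Ioi 0)) (nhds 0) := by
      rw [hw0] at hνS
      exact Tendsto.congr' heq hνS
    rw [hDeq, this.limsup_eq, hv0, hν.zero', mul_zero]
  · obtain ⟨c, hc, hlow⟩ := hν.lower v hv0
    have hνv : 0 < ν v := hν.pos v hv0
    have hu : ν ((ν v)⁻¹ • v) = 1 := by
      rw [hν.homog, abs_of_nonneg (inv_nonneg.2 hνv.le), inv_mul_cancel₀ hνv.ne']
    obtain ⟨m, hm⟩ := exists_matrixMeasure hν hc hlow hu M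
    have hmb := hb m hm
    set g : ℝ → ℝ := fun h => (opNorm ν (1 + h • M) - 1) / h with hg
    have hqle : ∀ᶠ h in nhdsWithin (0:ℝ) (Set.Ioi 0),
        q h ≤ g h * ν v + ν (S h - w) := by
      filter_upwards [self_mem_nhdsWithin] with h hh
      have hh' : (0:ℝ) < h := hh
      have hkey : ν (X (t + h) - xstar)
          ≤ opNorm ν (1 + h • M) * ν v + h * ν (S h - w) := by
        have hsplit : X (t + h) - xstar = (v + h • w) + h • (S h - w) := by
          rw [hid h hh', smul_sub]; abel
        have h1 : ν (X (t + h) - xstar) ≤ ν (v + h • w) + ν (h • (S h - w)) := by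
          rw [hsplit]; exact hν.triangle _ _
        have h2 : v + h • w = (1 + h • M).mulVec v := by
          rw [Matrix.add_mulVec, Matrix.one_mulVec, Matrix.smul_mulVec, hw]
        have h3 : ν ((1 + h • M).mulVec v) ≤ opNorm ν (1 + h • M) * ν v :=
          le_opNorm hν hc hlow _ _
        have h4 : ν (h • (S h - w)) = h * ν (S h - w) := by
          rw [hν.homog, abs_of_nonneg hh'.le]
        rw [h2, h4] at h1
        linarith
      rw [hq, div_le_iff₀ hh']
      have h5 : (g h * ν v + ν (S h - w)) * h
          = (opNorm ν (1 + h • M) - 1) * ν v + h * ν (S h - w) := by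
        rw [hg]
        field_simp
      rw [h5]
      linarith
    have hR : Tendsto (fun h => g h * ν v + ν (S h - w))
        (nhdsWithin (0:ℝ) (Set.Ioi 0)) (nhds (m * ν v + 0)) :=
      (hm.mul_const _).add hdiff
    rw [add_zero] at hR
    have hlimsup : limsup q (nhdsWithin (0:ℝ) (Set.Ioi 0)) ≤ m * ν v :=
      le_of_le_of_eq (limsup_le_limsup hqle hcob hR.isBoundedUnder_le) hR.limsup_eq
    rw [hDeq]
    exact hlimsup.trans (mul_le_mul_of_nonneg_right hmb (hν.nonneg v))

end Aux

/-- Theorem 36, sufficient condition: a factorization `f(t,x) = A(t,x)(x − x*)`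
with `μ(A(t,x)) ≤ b` implies the Dini derivative bound and hence exponential
convergence to the equilibrium `x*`. -/
theorem equilibrium_contraction_factorization {n : ℕ}
    (f : ℝ → (Fin n → ℝ) → Fin n → ℝ) (xstar : Fin n → ℝ)
    (A : ℝ → (Fin n → ℝ) → Matrix (Fin n) (Fin n) ℝ)
    (C : Set (Fin n → ℝ)) (ν : (Fin n → ℝ) → ℝ) (b : ℝ)
    -- `f` is continuous in `(t,x)` and `x*` is an equilibrium
    (hf : Continuous fun p : ℝ × (Fin n → ℝ) => f p.1 p.2)
    (hxstar : ∀ t, 0 ≤ t → f t xstar = 0)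
    -- `C` is open, convex, forward invariant, and contains `x*`
    (hCopen : IsOpen C) (hCconv : Convex ℝ C) (hxC : xstar ∈ C)
    (hCinv : ∀ (x : ℝ → Fin n → ℝ) (t₀ T : ℝ), 0 ≤ t₀ → t₀ ≤ T →
      (∀ t ∈ Set.Icc t₀ T, HasDerivAt x (f t (x t)) t) → x t₀ ∈ C →
      ∀ t ∈ Set.Icc t₀ T, x t ∈ C)
    -- `ν` is a norm
    (hν : IsNorm ν)
    -- `A` is continuous, factorizes `f`, and has matrix measure at most `b`
    (hA : Continuous fun p : ℝ × (Fin n → ℝ) => A p.1 p.2)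
    (hfA : ∀ t x, f t x = (A t x).mulVec (x - xstar))
    (hmeas : ∀ t x m, HasMatrixMeasure ν (A t x) m → m ≤ b) :
    ∀ (X : ℝ → Fin n → ℝ) (t₀ T : ℝ), 0 ≤ t₀ → t₀ ≤ T →
      (∀ t ∈ Set.Icc t₀ T, HasDerivAt X (f t (X t)) t) → X t₀ ∈ C →
      (∀ t ∈ Set.Icc t₀ T,
        DiniUpper (fun s => ν (X s - xstar)) t ≤ b * ν (X t - xstar)) ∧
      (∀ s ∈ Set.Icc t₀ T, ∀ t ∈ Set.Icc s T,
        ν (X t - xstar) ≤ Real.exp (b * (t - s)) * ν (X s - xstar)) := by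
  intro X t₀ T ht₀ htT hsol hC0
  have hdini : ∀ t ∈ Set.Icc t₀ T,
      DiniUpper (fun r => ν (X r - xstar)) t ≤ b * ν (X t - xstar) ∧
      IsBoundedUnder (· ≤ ·) (nhdsWithin (0:ℝ) (Set.Ioi 0))
        (fun h : ℝ => (ν (X (t + h) - xstar) - ν (X t - xstar)) / h) := by
    intro t ht
    have hX : HasDerivAt X ((A t (X t)).mulVec (X t - xstar)) t := by
      have := hsol t ht
      rwa [hfA t (X t)] at this
    exact dini_key hν b X xstar (A t (X t)) t hX (fun m hm => hmeas t (X t) m hm)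
  refine ⟨fun t ht => (hdini t ht).1, ?_⟩
  intro s hs t ht
  set φ : ℝ → ℝ := fun r => ν (X r - xstar) with hφ
  have hφcont : ContinuousOn φ (Set.Icc s T) := by
    intro r hr
    have hr' : r ∈ Set.Icc t₀ T := ⟨hs.1.trans hr.1, hr.2⟩
    have hXc : ContinuousAt X r := (hsol r hr').continuousAt
    exact (hν.continuous.continuousAt.comp (hXc.sub continuousAt_const)).continuousWithinAt
  have key := le_gronwallBound_of_liminf_deriv_right_le (f := φ)
      (f' := fun r => b * φ r) (δ := φ s) (K := b) (ε := 0) (a := s) (b := T)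
      hφcont ?_ le_rfl (fun r _ => by simp) t ht
  · rw [gronwallBound_ε0] at key
    calc ν (X t - xstar) = φ t := rfl
      _ ≤ φ s * Real.exp (b * (t - s)) := key
      _ = Real.exp (b * (t - s)) * ν (X s - xstar) := mul_comm _ _
  · intro r hr rr hrr
    have hr' : r ∈ Set.Icc t₀ T := ⟨hs.1.trans hr.1, hr.2.le⟩
    obtain ⟨hD, hB⟩ := hdini r hr'
    have hDeq : DiniUpper φ r
        = limsup (fun h : ℝ => (φ (r + h) - φ r) / h) (nhdsWithin (0:ℝ) (Set.Ioi 0)) := rfl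
    have hlim : limsup (fun h : ℝ => (φ (r + h) - φ r) / h)
        (nhdsWithin (0:ℝ) (Set.Ioi 0)) < rr := by
      rw [← hDeq]
      exact lt_of_le_of_lt hD hrr
    have hev := eventually_lt_of_limsup_lt hlim hB
    have hmap : Tendsto (fun z : ℝ => z - r) (nhdsWithin r (Set.Ioi r))
        (nhdsWithin 0 (Set.Ioi 0)) := by
      apply tendsto_nhdsWithin_of_tendsto_nhds_of_eventually_within
      · have : Tendsto (fun z : ℝ => z - r) (nhds r) (nhds (r - r)) :=
          (continuous_id.sub continuous_const).tendsto r
        rw [sub_self] at this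
        exact this.mono_left nhdsWithin_le_nhds
      · filter_upwards [self_mem_nhdsWithin] with z hz
        exact sub_pos.2 (Set.mem_Ioi.1 hz)
    have hev2 := hmap.eventually hev
    refine (hev2.mono fun z hz => ?_).frequently
    have : r + (z - r) = z := by ring
    rw [this] at hz
    rwa [div_eq_inv_mul] at hz
end

section
/- Consider ẋ = f(t,x,u(t)) with f : ℝ≥0 × ℝⁿ × ℝᵏ → ℝⁿ continuous, a norm ‖·‖_X on ℝⁿ with compatible weak pairing ⟦·,·⟧_X satisfying the curve norm derivative formula, a norm ‖·‖_U on ℝᵏ, and constants c, ℓ > 0. Assume: (A1') there exist x* ∈ ℝⁿ and a continuous u* : ℝ≥0 → ℝᵏ with f(t,x*,u*(t)) = 0 for all t, and ⟦f(t,x,u) − f(t,x*,u), x − x*⟧_X ≤ −c‖x − x*‖_X² for all t ≥ 0, x ∈ ℝⁿ, u ∈ ℝᵏ; (A2) ‖f(t,x,u) − f(t,x,v)‖_X ≤ ℓ‖u − v‖_U for all t, x, u, v. Then any solution x(t) with continuous input u satisfies: (i) D⁺‖x(t) − x*‖_X ≤ −c‖x(t) − x*‖_X + ℓ‖u(t)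 − u*(t)‖_U for all t ≥ 0; and (ii) ‖x(t) − x*‖_X ≤ e^{−ct}‖x₀ − x*‖_X + (ℓ(1 − e^{−ct})/c)·sup_{τ∈[0,t]} ‖u(τ) − u*(τ)‖_U. -/
open Filter Topology MeasureTheory

namespace IsNorm
variable {m : ℕ} {ν : (Fin m → ℝ) → ℝ}

lemma zero'_s6 (hν : IsNorm ν) : ν 0 = 0 := by
  have := hν.homog 0 0
  simpa using this

lemma nonneg' (hν : IsNorm ν) (a : Fin m → ℝ) : 0 ≤ ν a := by
  rcases eq_or_ne a 0 with rfl | h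
  · exact hν.zero'_s6.ge
  · exact (hν.pos a h).le

lemma sub_le' (hν : IsNorm ν) (a b : Fin m → ℝ) : ν a - ν b ≤ ν (a - b) := by
  have := hν.triangle (a - b) b
  simpa using this

lemma abs_sub_le' (hν : IsNorm ν) (a b : Fin m → ℝ) : |ν a - ν b| ≤ ν (a - b) := by
  rw [abs_sub_le_iff]
  constructor
  · exact hν.sub_le' a b
  · have := hν.sub_le' b a
    have h2 : ν (b - a) = ν (a - b) := by
      have := hν.homog (-1) (a - b)
      simpa [neg_sub] using this
    linarith

lemma sum_le' (hν : IsNorm ν) (s : Finset (Fin m)) (F : Fin m → (Fin m → ℝ)) :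
    ν (∑ i ∈ s, F i) ≤ ∑ i ∈ s, ν (F i) := by
  classical
  induction s using Finset.cons_induction with
  | empty => simp [hν.zero'_s6]
  | cons i s his ih =>
      rw [Finset.sum_cons, Finset.sum_cons]
      exact (hν.triangle _ _).trans (by linarith)

lemma continuous' (hν : IsNorm ν) : Continuous ν := by
  have hb : ∀ w : Fin m → ℝ, ν w ≤ ∑ i, |w i| * ν (fun j => if i = j then 1 else 0) := by
    intro w
    have hw : w = ∑ i, w i • fun j => if i = j then (1:ℝ) else 0 := pi_eq_sum_univ w
    calc ν w ≤ ∑ i, ν (w i • fun j => if i = j then (1:ℝ) else 0) := by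
          conv_lhs => rw [hw]
          exact hν.sum_le' _ _
      _ = ∑ i, |w i| * ν (fun j => if i = j then 1 else 0) := by
          simp [hν.homog]
  have h0 : Tendsto ν (𝓝 0) (𝓝 0) := by
    have hB : Tendsto (fun w : Fin m → ℝ => ∑ i, |w i| * ν (fun j => if i = j then 1 else 0))
        (𝓝 0) (𝓝 0) := by
      have : Continuous (fun w : Fin m → ℝ => ∑ i, |w i| * ν (fun j => if i = j then 1 else 0)) := by
        continuity
      simpa using this.tendsto 0
    exact tendsto_of_tendsto_of_tendsto_of_le_of_le tendsto_const_nhds hB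
      (fun w => hν.nonneg' w) (fun w => hb w)
  rw [continuous_iff_continuousAt]
  intro b
  have key : Tendsto (fun a => ν (a - b)) (𝓝 b) (𝓝 0) := by
    have : Tendsto (fun a : Fin m → ℝ => a - b) (𝓝 b) (𝓝 (b - b)) :=
      (continuous_id.sub continuous_const).tendsto b
    rw [sub_self] at this
    exact h0.comp this
  have : Tendsto (fun a => ν a - ν b) (𝓝 b) (𝓝 0) :=
    squeeze_zero_norm (fun a => hν.abs_sub_le' a b) key
  have := this.add (tendsto_const_nhds (x := ν b))
  exact (by simpa using this : Tendsto (fun x => ν x) (𝓝 b) (𝓝 (ν b)))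

lemma convexOn' (hν : IsNorm ν) : ConvexOn ℝ Set.univ ν := by
  refine ⟨convex_univ, fun p _ q _ a b ha hb hab => ?_⟩
  calc ν (a • p + b • q) ≤ ν (a • p) + ν (b • q) := hν.triangle _ _
    _ = a * ν p + b * ν q := by rw [hν.homog, hν.homog, abs_of_nonneg ha, abs_of_nonneg hb]

end IsNorm

section Key
variable {n k : ℕ}

theorem key_slope
    (f : ℝ → (Fin n → ℝ) → (Fin k → ℝ) → Fin n → ℝ)
    (νX : (Fin n → ℝ) → ℝ) (PX : (Fin n → ℝ) → (Fin n → ℝ) → ℝ)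
    (νU : (Fin k → ℝ) → ℝ) (c ℓ : ℝ)
    (hf : Continuous fun p : ℝ × (Fin n → ℝ) × (Fin k → ℝ) => f p.1 p.2.1 p.2.2)
    (hνX : IsNorm νX) (hPX : IsWeakPairing PX) (hcomp : Compatible νX PX)
    (hCNDF : CurveNormDerivFormula νX PX)
    (xstar : Fin n → ℝ) (ustar : ℝ → Fin k → ℝ)
    (heq : ∀ t, 0 ≤ t → f t xstar (ustar t) = 0)
    (hA1' : ∀ t, 0 ≤ t → ∀ (x : Fin n → ℝ) (u : Fin k → ℝ),
      PX (f t x u - f t xstar u) (x - xstar) ≤ -c * νX (x - xstar) ^ 2)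
    (hA2 : ∀ t, 0 ≤ t → ∀ (x : Fin n → ℝ) (u v : Fin k → ℝ),
      νX (f t x u - f t x v) ≤ ℓ * νU (u - v))
    (x : ℝ → Fin n → ℝ) (u : ℝ → Fin k → ℝ)
    (t : ℝ) (ht : 0 ≤ t) (hv : HasDerivAt x (f t (x t) (u t)) t) :
    ∃ L : ℝ,
      Tendsto (fun h : ℝ => (νX (x (t + h) - xstar) - νX (x t - xstar)) / h)
        (𝓝[>] (0:ℝ)) (𝓝 L) ∧
      L ≤ -c * νX (x t - xstar) + ℓ * νU (u t - ustar t) := by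
  set v : Fin n → ℝ := f t (x t) (u t) with hvdef
  set y : Fin n → ℝ := x t - xstar with hydef
  set ψ : ℝ → ℝ := fun s => νX (y + s • v) with hψdef
  have hψ0 : ψ 0 = νX y := by simp [hψdef]
  -- convexity of ψ
  have ψconv : ConvexOn ℝ Set.univ ψ := by
    refine ⟨convex_univ, fun p _ q _ a b ha hb hab => ?_⟩
    have hco : y + (a * p + b * q) • v = a • (y + p • v) + b • (y + q • v) := by
      have h2 : a • (y + p • v) + b • (y + q • v) = (a + b) • y + (a * p + b * q) • v := by
        module
      rw [h2, hab, one_smul]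
    calc νX (y + (a * p + b * q) • v) = νX (a • (y + p • v) + b • (y + q • v)) := by rw [hco]
      _ ≤ νX (a • (y + p • v)) + νX (b • (y + q • v)) := hνX.triangle _ _
      _ = a * ψ p + b * ψ q := by
          rw [hνX.homog, hνX.homog, abs_of_nonneg ha, abs_of_nonneg hb]
  have Mslope : MonotoneOn (slope ψ 0) (Set.univ \ {0}) := ψconv.slope_mono (Set.mem_univ 0)
  have memS : ∀ s : ℝ, s ≠ 0 → s ∈ Set.univ \ {0} := fun s hs => ⟨Set.mem_univ s, hs⟩
  have hbdd : BddBelow (slope ψ 0 '' Set.Ioi 0) := by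
    refine ⟨slope ψ 0 (-1), ?_⟩
    rintro r ⟨s, hs, rfl⟩
    exact Mslope (memS _ (by norm_num)) (memS s (ne_of_gt hs)) (by linarith [Set.mem_Ioi.mp hs])
  set L : ℝ := sInf (slope ψ 0 '' Set.Ioi 0) with hLdef
  have hLten : Tendsto (slope ψ 0) (𝓝[>] (0:ℝ)) (𝓝 L) :=
    MonotoneOn.tendsto_nhdsGT
      (Mslope.mono (fun s hs => memS s (ne_of_gt hs))) hbdd
  have hLle : ∀ s : ℝ, 0 < s → L ≤ slope ψ 0 s := fun s hs =>
    csInf_le hbdd ⟨s, hs, rfl⟩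
  have slope_eq : ∀ s : ℝ, slope ψ 0 s = (ψ s - ψ 0) / s := by
    intro s; rw [slope_def_field]; ring_nf
  -- part 1 : tendsto
  have hL1 : Tendsto (fun h : ℝ => (νX (x (t + h) - xstar) - νX (x t - xstar)) / h)
      (𝓝[>] (0:ℝ)) (𝓝 L) := by
    have he : Tendsto (fun h : ℝ => t + h) (𝓝[>] (0:ℝ)) (𝓝[≠] t) := by
      rw [tendsto_nhdsWithin_iff]
      constructor
      · have h1 : Tendsto (fun h : ℝ => t + h) (𝓝 0) (𝓝 (t + 0)) :=
          (continuous_const.add continuous_id).tendsto 0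
        rw [add_zero] at h1
        exact h1.mono_left nhdsWithin_le_nhds
      · filter_upwards [self_mem_nhdsWithin] with h hh
        simp only [Set.mem_compl_iff, Set.mem_singleton_iff]
        have : (0:ℝ) < h := hh
        intro hcon; nlinarith [congrArg (fun z => z - t) hcon]
    have hslope : Tendsto (fun h : ℝ => h⁻¹ • (x (t + h) - x t)) (𝓝[>] (0:ℝ)) (𝓝 v) := by
      have := (hasDerivAt_iff_tendsto_slope.mp hv).comp he
      refine this.congr (fun h => ?_)
      simp [slope, vsub_eq_sub]
    have h3 : Tendsto (fun h : ℝ => h⁻¹ • (x (t + h) - x t) - v) (𝓝[>] (0:ℝ)) (𝓝 0) := by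
      simpa using hslope.sub (tendsto_const_nhds (x := v))
    have hdiff : Tendsto (fun h : ℝ => νX (h⁻¹ • (x (t + h) - x t) - v)) (𝓝[>] (0:ℝ)) (𝓝 0) := by
      have := (hνX.continuous'.tendsto 0).comp h3
      simpa [hνX.zero'_s6, Function.comp_def] using this
    have hev : ∀ᶠ h in 𝓝[>] (0:ℝ),
        ‖((νX (x (t + h) - xstar) - νX (x t - xstar)) / h) - slope ψ 0 h‖
          ≤ νX (h⁻¹ • (x (t + h) - x t) - v) := by
      filter_upwards [self_mem_nhdsWithin] with h hh
      have hh' : (0:ℝ) < h := hh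
      have hne : h ≠ 0 := ne_of_gt hh'
      have hkey : x (t + h) - xstar - (y + h • v) = h • (h⁻¹ • (x (t + h) - x t) - v) := by
        rw [smul_sub, smul_inv_smul₀ hne, hydef]
        abel
      have hABS : |νX (x (t + h) - xstar) - ψ h| ≤ h * νX (h⁻¹ • (x (t + h) - x t) - v) := by
        have := hνX.abs_sub_le' (x (t + h) - xstar) (y + h • v)
        rw [hkey, hνX.homog, abs_of_pos hh'] at this
        exact this
      have heq2 : (νX (x (t + h) - xstar) - νX (x t - xstar)) / h - slope ψ 0 h
          = (νX (x (t + h) - xstar) - ψ h) / h := by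
        rw [slope_eq, hψ0, hydef]
        field_simp
        ring
      rw [heq2, Real.norm_eq_abs, abs_div, abs_of_pos hh', div_le_iff₀ hh']
      linarith [hABS]
    have hd0 : Tendsto (fun h : ℝ =>
        ((νX (x (t + h) - xstar) - νX (x t - xstar)) / h) - slope ψ 0 h)
        (𝓝[>] (0:ℝ)) (𝓝 0) := squeeze_zero_norm' hev hdiff
    have := hLten.add hd0
    rw [add_zero] at this
    refine this.congr (fun h => ?_)
    ring
  have hbound : ∀ w : Fin n → ℝ, PX w w = νX w ^ 2 := hcomp
  have hCS : ∀ a b : Fin n → ℝ, PX a b ≤ νX a * νX b := by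
    intro a b
    have h1 := (le_abs_self _).trans (hPX.cauchySchwarz a b)
    rwa [hbound, hbound, Real.sqrt_sq (hνX.nonneg' a), Real.sqrt_sq (hνX.nonneg' b)] at h1
  have he0 : νX (f t xstar (u t)) ≤ ℓ * νU (u t - ustar t) := by
    have h1 := hA2 t ht xstar (u t) (ustar t)
    rwa [heq t ht, sub_zero] at h1
  have hL2 : L ≤ -c * νX (x t - xstar) + ℓ * νU (u t - ustar t) := by
    rcases (hνX.nonneg' y).eq_or_lt with hy0 | hpos
    · -- the case x t = xstar
      have hyz : y = 0 := by
        by_contra hy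
        exact absurd hy0.symm (ne_of_gt (hνX.pos y hy))
      have hxt : x t = xstar := by
        have := hydef.symm.trans hyz
        exact sub_eq_zero.mp this
      have hL1' : L ≤ νX v := by
        have h1 := hLle 1 one_pos
        rw [slope_eq, hψ0, hyz] at h1
        have hψ1 : ψ 1 = νX v := by rw [hψdef]; simp [hyz]
        rw [hψ1] at h1
        simpa [hνX.zero'_s6] using h1
      have hvv : νX v ≤ ℓ * νU (u t - ustar t) := by
        rw [hvdef, hxt]; exact he0
      rw [hydef] at hy0
      rw [← hy0]
      linarith
    · -- the main case
      have hmain : νX y * L ≤ -c * νX y ^ 2 + νX (f t xstar (u t)) * νX y := by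
        by_contra hcon
        push_neg at hcon
        set q : ℝ → Fin n → ℝ :=
          fun s => v - (f t (x t + s • v) (u t) - f t xstar (u t)) with hqdef
        set E : ℝ → ℝ := fun s => (-c * ψ s ^ 2 + νX (q s) * ψ s) - ψ s * L with hEdef
        have hψcont : Continuous ψ := by
          rw [hψdef]
          exact hνX.continuous'.comp (continuous_const.add (continuous_id.smul continuous_const))
        have hqcont : Continuous q := by
          rw [hqdef]
          refine continuous_const.sub (Continuous.sub ?_ continuous_const)
          have : Continuous (fun s : ℝ => ((t, (x t + s • v, u t)) : ℝ × (Fin n → ℝ) × (Fin k → ℝ))) := by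
            exact continuous_const.prodMk
              ((continuous_const.add (continuous_id.smul continuous_const)).prodMk continuous_const)
          exact hf.comp this
        have hEcont : Continuous E := by
          have h1 : Continuous fun s => νX (q s) := hνX.continuous'.comp hqcont
          rw [hEdef]
          exact ((continuous_const.mul (hψcont.pow 2)).add (h1.mul hψcont)).sub
            (hψcont.mul continuous_const)
        have hq0 : q 0 = f t xstar (u t) := by
          rw [hqdef]
          simp only [zero_smul, add_zero]
          rw [hvdef]
          exact sub_sub_cancel _ _
        have hE0 : E 0 < 0 := by
          rw [hEdef]
          simp only [hψ0, hq0]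
          linarith
        have hev : ∀ᶠ s in 𝓝 (0:ℝ), E s < 0 :=
          hEcont.continuousAt (Iio_mem_nhds hE0)
        rw [Metric.eventually_nhds_iff] at hev
        obtain ⟨δ, hδpos, hδ⟩ := hev
        set δ' : ℝ := min δ 1 with hδ'def
        have hδ'pos : 0 < δ' := lt_min hδpos one_pos
        -- apply CNDF to the straight line
        have hcurve : ∀ s ∈ Set.Ioo (-1:ℝ) 1, HasDerivAt (fun r : ℝ => y + r • v) v s := by
          intro s _
          have h1 : HasDerivAt (fun r : ℝ => r • v) ((1:ℝ) • v) s := (hasDerivAt_id s).smul_const v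
          rw [one_smul] at h1
          exact h1.const_add y
        have hae := hCNDF (-1) 1 (fun r => y + r • v) (fun _ => v) hcurve
        -- pick a good point s₀ ∈ Ioo 0 δ'
        have hae' : ∀ᵐ s ∂(volume : Measure ℝ), s ∈ Set.Ioo (-1:ℝ) 1 →
            ψ s * DiniUpper ψ s = PX v (y + s • v) := hae
        obtain ⟨s₀, hs₀mem, hQ⟩ : ∃ s₀ ∈ Set.Ioo (0:ℝ) δ',
            ψ s₀ * DiniUpper ψ s₀ = PX v (y + s₀ • v) := by
          by_contra hno
          push_neg at hno
          have hsub : Set.Ioo (0:ℝ) δ' ⊆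
              {s | ¬ (s ∈ Set.Ioo (-1:ℝ) 1 → ψ s * DiniUpper ψ s = PX v (y + s • v))} := by
            intro s hs
            simp only [Set.mem_setOf_eq, Classical.not_imp]
            refine ⟨⟨by linarith [hs.1], lt_of_lt_of_le hs.2 (min_le_right δ 1)⟩, hno s hs⟩
          have hnull := measure_mono_null hsub (ae_iff.mp hae')
          rw [Real.volume_Ioo] at hnull
          simp only [ENNReal.ofReal_eq_zero, sub_zero] at hnull
          linarith
        obtain ⟨hs₀pos, hs₀lt⟩ := hs₀mem
        -- L is at most the Dini derivative of ψ at s₀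
        have hDini : L ≤ DiniUpper ψ s₀ := by
          have hfreq : ∀ᶠ h in 𝓝[>] (0:ℝ), L ≤ (ψ (s₀ + h) - ψ (s₀)) / h := by
            filter_upwards [self_mem_nhdsWithin] with h hh
            have hh' : (0:ℝ) < h := hh
            have hadj := ψconv.slope_mono_adjacent (Set.mem_univ (0:ℝ))
              (Set.mem_univ (s₀ + h)) hs₀pos (by linarith)
            have hL0 := hLle s₀ hs₀pos
            rw [slope_eq] at hL0
            have : (ψ s₀ - ψ 0) / (s₀ - 0) ≤ (ψ (s₀ + h) - ψ s₀) / (s₀ + h - s₀) := hadj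
            rw [sub_zero, add_sub_cancel_left] at this
            linarith
          have hbddA : IsBoundedUnder (· ≤ ·) (𝓝[>] (0:ℝ))
              (fun h => (ψ (s₀ + h) - ψ s₀) / h) := by
            refine isBoundedUnder_of_eventually_le (a := (ψ (s₀ + 1) - ψ s₀) / 1) ?_
            filter_upwards [Ioo_mem_nhdsGT_of_mem (by norm_num : (0:ℝ) ∈ Set.Ico 0 1)] with h hh
            obtain ⟨hh1, hh2⟩ := hh
            have hms := ψconv.slope_mono (Set.mem_univ s₀)
            have h1 : slope ψ s₀ (s₀ + h) ≤ slope ψ s₀ (s₀ + 1) := by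
              refine hms ⟨Set.mem_univ _, ?_⟩ ⟨Set.mem_univ _, ?_⟩ (by linarith)
              · simp only [Set.mem_singleton_iff]; intro hc; nlinarith [congrArg (fun z => z - s₀) hc]
              · simp only [Set.mem_singleton_iff]; intro hc; nlinarith [congrArg (fun z => z - s₀) hc]
            rw [slope_def_field, slope_def_field, add_sub_cancel_left, add_sub_cancel_left] at h1
            exact h1
          exact le_limsup_of_frequently_le hfreq.frequently hbddA
        -- chain of inequalities at s₀
        have h1 : ψ s₀ * L ≤ PX v (y + s₀ • v) := by
          rcases (hνX.nonneg' (y + s₀ • v)).eq_or_lt with hz | hz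
          · have hψz : ψ s₀ = 0 := by rw [hψdef]; exact hz.symm
            rw [hψz, zero_mul, ← hQ, hψz, zero_mul]
          · have hψz : (0:ℝ) < ψ s₀ := by rw [hψdef]; exact hz
            rw [← hQ]
            exact mul_le_mul_of_nonneg_left hDini hψz.le
        have h2 : PX v (y + s₀ • v) ≤ -c * ψ s₀ ^ 2 + νX (q s₀) * ψ s₀ := by
          set Δ : Fin n → ℝ := f t (x t + s₀ • v) (u t) - f t xstar (u t) with hΔdef
          have hsplit : v = q s₀ + Δ := by rw [hqdef, hΔdef]; simp
          have hsub := hPX.subadd (q s₀) Δ (y + s₀ • v)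
          have harg : x t + s₀ • v - xstar = y + s₀ • v := by rw [hydef]; module
          have hA1x := hA1' t ht (x t + s₀ • v) (u t)
          rw [harg] at hA1x
          have hCSx : PX (q s₀) (y + s₀ • v) ≤ νX (q s₀) * νX (y + s₀ • v) := hCS _ _
          have hψs : ψ s₀ = νX (y + s₀ • v) := by rw [hψdef]
          calc PX v (y + s₀ • v) = PX (q s₀ + Δ) (y + s₀ • v) := by rw [← hsplit]
            _ ≤ PX (q s₀) (y + s₀ • v) + PX Δ (y + s₀ • v) := hsub
            _ ≤ νX (q s₀) * νX (y + s₀ • v) + -c * νX (y + s₀ • v) ^ 2 := by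
                exact add_le_add hCSx hA1x
            _ = -c * ψ s₀ ^ 2 + νX (q s₀) * ψ s₀ := by rw [hψs]; ring
        have hEge : 0 ≤ E s₀ := by
          rw [hEdef]
          simp only []
          linarith
        have hElt : E s₀ < 0 := by
          apply hδ
          rw [Real.dist_eq, sub_zero, abs_of_pos hs₀pos]
          exact lt_of_lt_of_le hs₀lt (min_le_left δ 1)
        linarith
      have hstep : L ≤ -c * νX y + νX (f t xstar (u t)) := by
        have h1 : νX y * L ≤ νX y * (-c * νX y + νX (f t xstar (u t))) := by nlinarith
        exact (mul_le_mul_iff_right₀ hpos).mp h1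
      rw [hydef] at hstep
      linarith
  exact ⟨L, hL1, hL2⟩

end Key

/-- Theorem 39 (iv)-(v): input-to-state stability of equilibrium contracting
systems with inputs. -/
theorem ISS_of_equilibrium_contracting {n k : ℕ}
    (f : ℝ → (Fin n → ℝ) → (Fin k → ℝ) → Fin n → ℝ)
    (νX : (Fin n → ℝ) → ℝ) (PX : (Fin n → ℝ) → (Fin n → ℝ) → ℝ)
    (νU : (Fin k → ℝ) → ℝ) (c ℓ : ℝ)
    (hf : Continuous fun p : ℝ × (Fin n → ℝ) × (Fin k → ℝ) => f p.1 p.2.1 p.2.2)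
    (hνX : IsNorm νX) (hPX : IsWeakPairing PX) (hcomp : Compatible νX PX)
    (hCNDF : CurveNormDerivFormula νX PX) (hνU : IsNorm νU)
    (hc : 0 < c) (hℓ : 0 < ℓ)
    -- (A1') equilibrium pair `(x*, u*)` and equilibrium contractivity
    (xstar : Fin n → ℝ) (ustar : ℝ → Fin k → ℝ) (hustar : Continuous ustar)
    (heq : ∀ t, 0 ≤ t → f t xstar (ustar t) = 0)
    (hA1' : ∀ t, 0 ≤ t → ∀ (x : Fin n → ℝ) (u : Fin k → ℝ),
      PX (f t x u - f t xstar u) (x - xstar) ≤ -c * νX (x - xstar) ^ 2)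
    -- (A2) Lipschitz dependence on the input
    (hA2 : ∀ t, 0 ≤ t → ∀ (x : Fin n → ℝ) (u v : Fin k → ℝ),
      νX (f t x u - f t x v) ≤ ℓ * νU (u - v))
    -- a solution with continuous input
    (x : ℝ → Fin n → ℝ) (u : ℝ → Fin k → ℝ) (hu : Continuous u)
    (hx : ∀ t, 0 ≤ t → HasDerivAt x (f t (x t) (u t)) t) :
    -- (i) Dini derivative estimate
    (∀ t, 0 ≤ t →
      DiniUpper (fun s => νX (x s - xstar)) t
        ≤ -c * νX (x t - xstar) + ℓ * νU (u t - ustar t)) ∧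
    -- (ii) input-to-state stability
    (∀ t, 0 ≤ t →
      νX (x t - xstar)
        ≤ Real.exp (-c * t) * νX (x 0 - xstar)
          + ℓ * (1 - Real.exp (-c * t)) / c *
            sSup ((fun τ => νU (u τ - ustar τ)) '' Set.Icc 0 t)) := by
  have key : ∀ t, 0 ≤ t → ∃ L : ℝ,
      Tendsto (fun h : ℝ => (νX (x (t + h) - xstar) - νX (x t - xstar)) / h)
        (𝓝[>] (0:ℝ)) (𝓝 L) ∧
      L ≤ -c * νX (x t - xstar) + ℓ * νU (u t - ustar t) :=
    fun t ht => key_slope f νX PX νU c ℓ hf hνX hPX hcomp hCNDF xstar ustar heq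
      hA1' hA2 x u t ht (hx t ht)
  constructor
  · intro t ht
    obtain ⟨L, hL1, hL2⟩ := key t ht
    have hD : DiniUpper (fun s => νX (x s - xstar)) t = L := hL1.limsup_eq
    rw [hD]
    exact hL2
  · intro T hT
    set g : ℝ → ℝ := fun τ => νU (u τ - ustar τ) with hgdef
    have hgc : Continuous g := hνU.continuous'.comp (hu.sub hustar)
    set M : ℝ := sSup (g '' Set.Icc 0 T) with hMdef
    have hbddM : BddAbove (g '' Set.Icc 0 T) := (isCompact_Icc.image hgc).bddAbove
    have hM : ∀ τ ∈ Set.Icc (0:ℝ) T, g τ ≤ M := fun τ hτ => le_csSup hbddM ⟨τ, hτ, rfl⟩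
    set φ : ℝ → ℝ := fun τ => νX (x τ - xstar) with hφdef
    have hφcont : ContinuousOn φ (Set.Icc 0 T) := by
      intro τ hτ
      exact (ContinuousAt.comp hνX.continuous'.continuousAt
        ((hx τ hτ.1).continuousAt.sub continuousAt_const)).continuousWithinAt
    have hf' : ∀ τ ∈ Set.Ico (0:ℝ) T, ∀ r, (-c * φ τ + ℓ * M) < r →
        ∃ᶠ z in 𝓝[>] τ, (z - τ)⁻¹ * (φ z - φ τ) < r := by
      intro τ hτ r hr
      obtain ⟨L, h1, h2⟩ := key τ hτ.1
      have hgM : ℓ * g τ ≤ ℓ * M :=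
        mul_le_mul_of_nonneg_left (hM τ ⟨hτ.1, hτ.2.le⟩) hℓ.le
      have hLr : L < r := by
        refine lt_of_le_of_lt (h2.trans ?_) hr
        have : ℓ * νU (u τ - ustar τ) = ℓ * g τ := by rw [hgdef]
        rw [this]
        linarith
      have hev : ∀ᶠ h in 𝓝[>] (0:ℝ),
          (νX (x (τ + h) - xstar) - νX (x τ - xstar)) / h < r :=
        h1.eventually_lt_const hLr
      have hmap : Tendsto (fun z : ℝ => z - τ) (𝓝[>] τ) (𝓝[>] (0:ℝ)) := by
        rw [tendsto_nhdsWithin_iff]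
        constructor
        · have h1' : Tendsto (fun z : ℝ => z - τ) (𝓝 τ) (𝓝 (τ - τ)) :=
            (continuous_id.sub continuous_const).tendsto τ
          rw [sub_self] at h1'
          exact h1'.mono_left nhdsWithin_le_nhds
        · filter_upwards [self_mem_nhdsWithin] with z hz
          simp only [Set.mem_Ioi] at hz ⊢
          linarith
      have := (hmap.eventually hev).frequently
      refine this.mono (fun z hz => ?_)
      have hzz : τ + (z - τ) = z := by ring
      rw [hzz] at hz
      rw [inv_mul_eq_div]
      exact hz
    have hres := le_gronwallBound_of_liminf_deriv_right_le (f := φ)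
      (f' := fun τ => -c * φ τ + ℓ * M) (δ := φ 0) (K := -c) (ε := ℓ * M)
      hφcont hf' le_rfl (fun τ _ => le_rfl) T (Set.right_mem_Icc.mpr hT)
    rw [sub_zero, gronwallBound_of_K_ne_0 (neg_ne_zero.mpr hc.ne')] at hres
    have hcast : φ 0 * Real.exp (-c * T) + ℓ * M / -c * (Real.exp (-c * T) - 1)
        = Real.exp (-c * T) * φ 0 + ℓ * (1 - Real.exp (-c * T)) / c * M := by
      field_simp [hc.ne']
      ring
    simp only [] at hres
    rw [hcast] at hres
    exact hres
end

section
/- Let ⟦·,·⟧ be a weak pairing on ℝⁿ compatible with a norm ‖·‖ and satisfying Deimling's inequality, and let f, g : ℝ≥0 × ℝⁿ → ℝⁿ. Suppose ⟦f(t,x) − f(t,y), x − y⟧ ≤ −c‖x − y‖² and ⟦g(t,x) − g(t,y), x − y⟧ ≤ d‖x − y‖² for all x, y ∈ ℝⁿ, t ≥ 0, where c > 0 and d ∈ ℝ. Then: (i) if d < c, then ⟦(f+g)(t,x) − (f+g)(t,y), x − y⟧ ≤ −(c − d)‖x − y‖² for all x, y, t, i.e., f + g is strongly contracting with rate c − d;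 (ii) if additionally f and g are time-invariant, then the unique equilibrium x* of f and the unique equilibrium x** of f + g satisfy ‖x* − x**‖ ≤ ‖g(x*)‖/(c − d). -/
open Filter Topology MeasureTheory

/-- Theorem 40 (contraction under perturbations): (i) if `d < c` then `f + g`
is strongly contracting with rate `c − d`; (ii) in the time-invariant case the
equilibria of `f` and `f + g` are within `‖g(x*)‖/(c−d)` of each other. -/
theorem contraction_under_perturbations {n : ℕ}
    (ν : (Fin n → ℝ) → ℝ) (P : (Fin n → ℝ) → (Fin n → ℝ) → ℝ)
    (hν : IsNorm ν) (hP : IsWeakPairing P) (hcomp : Compatible ν P)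
    (hDei : DeimlingIneq ν P)
    (f g : ℝ → (Fin n → ℝ) → Fin n → ℝ) (c d : ℝ) (hc : 0 < c)
    (hf : ∀ t, 0 ≤ t → ∀ x y : Fin n → ℝ,
      P (f t x - f t y) (x - y) ≤ -c * ν (x - y) ^ 2)
    (hg : ∀ t, 0 ≤ t → ∀ x y : Fin n → ℝ,
      P (g t x - g t y) (x - y) ≤ d * ν (x - y) ^ 2) :
    -- (i) contractivity under perturbations
    (d < c → ∀ t, 0 ≤ t → ∀ x y : Fin n → ℝ,
      P ((f t x + g t x) - (f t y + g t y)) (x - y)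
        ≤ -(c - d) * ν (x - y) ^ 2) ∧
    -- (ii) equilibrium point under perturbations (time-invariant case)
    (d < c → ∀ F G : (Fin n → ℝ) → Fin n → ℝ,
      (∀ t, 0 ≤ t → ∀ x, f t x = F x) →
      (∀ t, 0 ≤ t → ∀ x, g t x = G x) →
      ∀ xstar xstarstar : Fin n → ℝ,
        F xstar = 0 → F xstarstar + G xstarstar = 0 →
        ν (xstar - xstarstar) ≤ ν (G xstar) / (c - d)) := by
  have hν0 : ∀ x : Fin n → ℝ, 0 ≤ ν x := by
    intro x
    by_cases hx : x = 0
    · subst hx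
      have h := hν.homog 0 0
      simp at h
      simp [h]
    · exact (hν.pos x hx).le
  have part1 : d < c → ∀ t, 0 ≤ t → ∀ x y : Fin n → ℝ,
      P ((f t x + g t x) - (f t y + g t y)) (x - y)
        ≤ -(c - d) * ν (x - y) ^ 2 := by
    intro _ t ht x y
    have heq : (f t x + g t x) - (f t y + g t y)
        = (f t x - f t y) + (g t x - g t y) := by abel
    rw [heq]
    calc P ((f t x - f t y) + (g t x - g t y)) (x - y)
        ≤ P (f t x - f t y) (x - y) + P (g t x - g t y) (x - y) :=
          hP.subadd _ _ _
      _ ≤ -c * ν (x - y) ^ 2 + d * ν (x - y) ^ 2 :=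
          add_le_add (hf t ht x y) (hg t ht x y)
      _ = -(c - d) * ν (x - y) ^ 2 := by ring
  refine ⟨part1, ?_⟩
  intro hdc F G hF hG xstar xstarstar hx1 hx2
  have hcd : 0 < c - d := sub_pos.mpr hdc
  set e := xstar - xstarstar with he
  have key : P (G xstar) e ≤ -(c - d) * ν e ^ 2 := by
    have h := part1 hdc 0 le_rfl xstar xstarstar
    rw [hF 0 le_rfl, hF 0 le_rfl, hG 0 le_rfl, hG 0 le_rfl, hx1, hx2] at h
    simpa using h
  have hcs : |P (G xstar) e| ≤ ν (G xstar) * ν e := by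
    have := hP.cauchySchwarz (G xstar) e
    rwa [hcomp, hcomp, Real.sqrt_sq (hν0 _), Real.sqrt_sq (hν0 _)] at this
  have hlow : -(ν (G xstar) * ν e) ≤ P (G xstar) e := neg_le_of_abs_le hcs
  have hmain : (c - d) * ν e ^ 2 ≤ ν (G xstar) * ν e := by nlinarith
  by_cases hez : ν e = 0
  · rw [hez]
    exact div_nonneg (hν0 _) hcd.le
  · have hpos : 0 < ν e := lt_of_le_of_ne (hν0 _) (Ne.symm hez)
    rw [le_div_iff₀ hcd]
    have : (c - d) * ν e * ν e ≤ ν (G xstar) * ν e := by nlinarith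
    exact le_of_mul_le_mul_right (by linarith) hpos
end

section
/- Consider the interconnection of n continuous systems ẋᵢ = fᵢ(t, xᵢ, x₋ᵢ), i = 1,…,n, where xᵢ ∈ ℝ^{Nᵢ}, N = N₁+⋯+Nₙ, each ℝ^{Nᵢ} carries a norm ‖·‖ᵢ with compatible weak pairing ⟦·,·⟧ᵢ, and assume: (C1) for each i and each fixed x₋ᵢ and t, ⟦fᵢ(t,xᵢ,x₋ᵢ) − fᵢ(t,yᵢ,x₋ᵢ), xᵢ − yᵢ⟧ᵢ ≤ −cᵢ‖xᵢ − yᵢ‖ᵢ² with cᵢ > 0; (C2) for each i, fixed xᵢ and t, and all j ≠ i there exist γᵢⱼ ≥ 0 with ‖fᵢ(t,xᵢ,x₋ᵢ) − fᵢ(t,xᵢ,y₋ᵢ)‖ᵢ ≤ Σ_{j≠i} γᵢⱼ‖xⱼ − yⱼ‖ⱼ. Define the gain matrix Γ ∈ ℝⁿˣⁿ with diagonal entries −cᵢ and off-diagonal entries γᵢⱼ. If Γ is Hurwitz, then for every ε ∈ (0, |α(Γ)|) there exists ξ ∈ ℝⁿ with positive entries such that the interconnected system on ℝ^N satisfies Σᵢ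 ξᵢ⟦fᵢ(t,xᵢ,x₋ᵢ) − fᵢ(t,yᵢ,y₋ᵢ), xᵢ − yᵢ⟧ᵢ ≤ (α(Γ) + ε)·Σᵢ ξᵢ‖xᵢ − yᵢ‖ᵢ² for all x, y ∈ ℝ^N and t ≥ 0, i.e., it is strongly contracting with rate |α(Γ) + ε| with respect to the ξ-weighted aggregation norm ‖x‖_ξ² = Σᵢ ξᵢ‖xᵢ‖ᵢ²; moreover if Γ is irreducible the result holds with ε = 0. -/
open Filter Topology MeasureTheory

/-- The spectral abscissa of a real matrix: the largest real part of its
(complex) eigenvalues. -/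
noncomputable def specAbscissa {m : ℕ} (Γ : Matrix (Fin m) (Fin m) ℝ) : ℝ :=
  sSup (Complex.re '' spectrum ℂ (Γ.map (algebraMap ℝ ℂ)))

/-- A matrix is irreducible if its associated directed graph is strongly
connected, equivalently there is no nontrivial coordinate subset `S` with no
edge leaving `S`. -/
def MatrixIrreducible {m : ℕ} (Γ : Matrix (Fin m) (Fin m) ℝ) : Prop :=
  ∀ S : Set (Fin m), S.Nonempty → S ≠ Set.univ → ∃ i ∈ S, ∃ j, j ∉ S ∧ Γ i j ≠ 0


attribute [local instance] Matrix.linftyOpNormedRing Matrix.linftyOpNormedAlgebra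

private lemma row_sum_norm_le {n : ℕ} (M : Matrix (Fin n) (Fin n) ℂ) (i : Fin n) :
    ∑ j, ‖M i j‖ ≤ ‖M‖ := by
  rw [Matrix.linfty_opNorm_def]
  have h : (∑ j, ‖M i j‖₊) ≤ Finset.univ.sup fun i => ∑ j, ‖M i j‖₊ :=
    Finset.le_sup (f := fun i => ∑ j, ‖M i j‖₊) (Finset.mem_univ i)
  calc ∑ j, ‖M i j‖ = ((∑ j, ‖M i j‖₊ : NNReal) : ℝ) := by push_cast; rfl
    _ ≤ _ := by exact_mod_cast h

private lemma pow_entry_nonneg {n : ℕ} {A : Matrix (Fin n) (Fin n) ℝ}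
    (hA : ∀ i j, 0 ≤ A i j) (k : ℕ) : ∀ i j, 0 ≤ (A ^ k) i j := by
  induction k with
  | zero =>
    intro i j
    rw [pow_zero, Matrix.one_apply]
    split <;> norm_num
  | succ k ih =>
    intro i j
    rw [pow_succ, Matrix.mul_apply]
    exact Finset.sum_nonneg fun l _ => mul_nonneg (ih i l) (hA l j)

private lemma map_pow_comm {n : ℕ} (A : Matrix (Fin n) (Fin n) ℝ) (k : ℕ) :
    (A.map (algebraMap ℝ ℂ)) ^ k = (A ^ k).map (algebraMap ℝ ℂ) := by
  induction k with
  | zero => simp [Matrix.map_one]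
  | succ k ih => rw [pow_succ, pow_succ, ih, Matrix.map_mul]

set_option maxHeartbeats 1000000 in
private lemma metzler_resolvent {n : ℕ} (hn : 0 < n) (Γ : Matrix (Fin n) (Fin n) ℝ) (κ : ℝ)
    (hM : ∀ i j, i ≠ j → 0 ≤ Γ i j)
    (hspec : ∀ μ ∈ spectrum ℂ (Γ.map (algebraMap ℝ ℂ)), μ.re < κ) :
    ∃ v : Fin n → ℝ, (∀ i, 0 < v i) ∧ ∀ i, ∑ j, Γ i j * v j < κ * v i := by
  haveI : NeZero n := ⟨hn.ne'⟩
  set S := spectrum ℂ (Γ.map (algebraMap ℝ ℂ)) with hS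
  have hcp : IsCompact S := spectrum.isCompact _
  have hne : S.Nonempty := spectrum.nonempty _
  obtain ⟨δ, R, hδ, hR0, hre, hR⟩ :
      ∃ δ R : ℝ, 0 < δ ∧ 0 ≤ R ∧ (∀ μ ∈ S, μ.re ≤ κ - δ) ∧ (∀ μ ∈ S, ‖μ‖ ≤ R) := by
    obtain ⟨μ₀, hμ₀, hmax⟩ := hcp.exists_isMaxOn hne (Complex.continuous_re.continuousOn)
    obtain ⟨R₀, hR₀⟩ := hcp.isBounded.subset_closedBall 0
    refine ⟨κ - μ₀.re, max R₀ 0, sub_pos.mpr (hspec μ₀ hμ₀), le_max_right _ _,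
      fun μ hμ => by have := hmax hμ; simp at this ⊢; linarith, fun μ hμ => ?_⟩
    have := hR₀ hμ
    simp only [Metric.mem_closedBall, Complex.dist_eq, sub_zero] at this
    exact le_max_of_le_left (by simpa using this)
  obtain ⟨s, hs0, hsdiag, hsη⟩ :
      ∃ s : ℝ, 0 < s ∧ (∀ i, 0 ≤ Γ i i + (s - κ)) ∧ (R + |κ|) ^ 2 < 2 * s * δ := by
    set B : ℝ := ∑ i, |Γ i i| with hBdef
    have hB0 : 0 ≤ B := Finset.sum_nonneg fun i _ => abs_nonneg _
    have hBi : ∀ i, |Γ i i| ≤ B := fun i =>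
      Finset.single_le_sum (f := fun i => |Γ i i|) (fun j _ => abs_nonneg _) (Finset.mem_univ i)
    have hfrac : 0 ≤ (R + |κ|) ^ 2 / (2 * δ) := by positivity
    refine ⟨1 + |κ| + B + (R + |κ|) ^ 2 / (2 * δ), by positivity, fun i => ?_, ?_⟩
    · have h1 := hBi i
      have h2 := neg_abs_le (Γ i i)
      have h3 := le_abs_self κ
      linarith
    · have h4 : 2 * (1 + |κ| + B + (R + |κ|) ^ 2 / (2 * δ)) * δ
          = 2 * δ * (1 + |κ| + B) + (R + |κ|) ^ 2 := by field_simp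
      have h5 : 0 < 2 * δ * (1 + |κ| + B) := by positivity
      linarith
  set A : Matrix (Fin n) (Fin n) ℝ := Γ + (s - κ) • (1 : Matrix (Fin n) (Fin n) ℝ) with hAdef
  have hAentry : ∀ i j, A i j = Γ i j + if i = j then s - κ else 0 := by
    intro i j
    simp [hAdef, Matrix.one_apply, Matrix.add_apply, Matrix.smul_apply, mul_ite]
  have hA0 : ∀ i j, 0 ≤ A i j := by
    intro i j
    rw [hAentry]
    by_cases h : i = j
    · subst h; rw [if_pos rfl]; exact hsdiag i
    · rw [if_neg h, add_zero]; exact hM i j h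
  set Amap : Matrix (Fin n) (Fin n) ℂ := A.map (algebraMap ℝ ℂ) with hAmap
  have hAmap_eq : Amap = algebraMap ℂ _ ((s - κ : ℝ) : ℂ) + Γ.map (algebraMap ℝ ℂ) := by
    ext i j
    rw [hAmap, Matrix.map_apply, Matrix.add_apply, Matrix.algebraMap_matrix_apply, hAentry,
      Matrix.map_apply]
    by_cases h : i = j
    · rw [if_pos h, if_pos h]
      simp only [Algebra.algebraMap_self, RingHom.id_apply, Complex.coe_algebraMap]
      push_cast; ring_nf
    · rw [if_neg h, if_neg h]; push_cast; ring
  have hspecA : ∀ z ∈ spectrum ℂ Amap, ∃ μ ∈ S, ((s - κ : ℝ) : ℂ) + μ = z := by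
    intro z hz
    rw [hAmap_eq, ← spectrum.singleton_add_eq, Set.singleton_add] at hz
    obtain ⟨μ, hμ, hzeq⟩ := hz
    exact ⟨μ, hμ, hzeq⟩
  have hzbound : ∀ z ∈ spectrum ℂ Amap,
      z.re ^ 2 + z.im ^ 2 ≤ s ^ 2 - (2 * s * δ - (R + |κ|) ^ 2) := by
    intro z hz
    obtain ⟨μ, hμ, hzeq⟩ := hspecA z hz
    have hre1 : μ.re ≤ κ - δ := hre μ hμ
    have hnorm : ‖μ‖ ≤ R := hR μ hμ
    have hsq : μ.re ^ 2 + μ.im ^ 2 ≤ R ^ 2 := by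
      have h1 : ‖μ‖ ^ 2 = μ.re ^ 2 + μ.im ^ 2 := by
        rw [Complex.sq_norm, Complex.normSq_apply]; ring
      rw [← h1]
      exact pow_le_pow_left₀ (norm_nonneg _) hnorm 2
    have hreabs : |μ.re| ≤ R := (Complex.abs_re_le_norm μ).trans hnorm
    have hzre : z.re = μ.re + (s - κ) := by rw [← hzeq]; simp [add_comm]
    have hzim : z.im = μ.im := by rw [← hzeq]; simp
    rw [hzre, hzim]
    have hk1 : 2 * s * μ.re ≤ 2 * s * (κ - δ) := by nlinarith
    have hk2 : -(μ.re * κ) ≤ R * |κ| := by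
      have h1 : |μ.re * κ| ≤ R * |κ| := by
        rw [abs_mul]; exact mul_le_mul_of_nonneg_right hreabs (abs_nonneg κ)
      linarith [neg_abs_le (μ.re * κ)]
    nlinarith [hk1, hk2, hsq, sq_abs κ]
  obtain ⟨r, s', hr0, hznorm, hrs', hs's, hs'0⟩ :
      ∃ r s' : ℝ, 0 ≤ r ∧ (∀ z ∈ spectrum ℂ Amap, ‖z‖ ≤ r) ∧ r < s' ∧ s' < s ∧ 0 < s' := by
    have hs2η : 0 ≤ s ^ 2 - (2 * s * δ - (R + |κ|) ^ 2) := by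
      obtain ⟨z, hz⟩ := spectrum.nonempty Amap
      have := hzbound z hz
      nlinarith [sq_nonneg z.re, sq_nonneg z.im]
    have hη : 0 < 2 * s * δ - (R + |κ|) ^ 2 := by linarith
    have hr2 : Real.sqrt (s ^ 2 - (2 * s * δ - (R + |κ|) ^ 2)) ^ 2
        = s ^ 2 - (2 * s * δ - (R + |κ|) ^ 2) := Real.sq_sqrt hs2η
    have hr0 : 0 ≤ Real.sqrt (s ^ 2 - (2 * s * δ - (R + |κ|) ^ 2)) := Real.sqrt_nonneg _
    have hrs : Real.sqrt (s ^ 2 - (2 * s * δ - (R + |κ|) ^ 2)) < s := by nlinarith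
    refine ⟨_, (Real.sqrt (s ^ 2 - (2 * s * δ - (R + |κ|) ^ 2)) + s) / 2, hr0, ?_,
      by linarith, by linarith, by linarith⟩
    intro z hz
    have h2 : ‖z‖ ^ 2 = z.re ^ 2 + z.im ^ 2 := by
      rw [Complex.sq_norm, Complex.normSq_apply]; ring
    have h1 : ‖z‖ ^ 2 ≤ Real.sqrt (s ^ 2 - (2 * s * δ - (R + |κ|) ^ 2)) ^ 2 := by
      rw [h2, hr2]; exact hzbound z hz
    nlinarith [norm_nonneg z]
  have hρ : spectralRadius ℂ Amap ≤ ENNReal.ofReal r := by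
    unfold spectralRadius
    refine iSup₂_le fun z hz => ?_
    rw [← enorm_eq_nnnorm, ← ofReal_norm]
    exact ENNReal.ofReal_le_ofReal (hznorm z hz)
  have hg := spectrum.pow_norm_pow_one_div_tendsto_nhds_spectralRadius Amap
  have hlt : spectralRadius ℂ Amap < ENNReal.ofReal s' :=
    lt_of_le_of_lt hρ (by rw [ENNReal.ofReal_lt_ofReal_iff hs'0]; exact hrs')
  have hev : ∀ᶠ k : ℕ in atTop,
      ENNReal.ofReal (‖Amap ^ k‖ ^ (1 / (k : ℝ))) < ENNReal.ofReal s' :=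
    hg.eventually_lt_const hlt
  obtain ⟨K₀, hK₀⟩ := hev.exists_forall_of_atTop
  obtain ⟨K, hKbound⟩ : ∃ K : ℕ, ∀ k, K ≤ k → ‖Amap ^ k‖ ≤ s' ^ k := by
    refine ⟨max K₀ 1, fun k hk => ?_⟩
    have hk1 : 1 ≤ k := le_trans (le_max_right _ _) hk
    have hkne : (k : ℝ) ≠ 0 := by positivity
    have h1 := hK₀ k (le_trans (le_max_left _ _) hk)
    rw [ENNReal.ofReal_lt_ofReal_iff hs'0] at h1
    have h2 : ‖Amap ^ k‖ ^ (1 / (k : ℝ)) ≤ s' := le_of_lt h1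
    have h0 : (0:ℝ) ≤ ‖Amap ^ k‖ ^ (1 / (k : ℝ)) := Real.rpow_nonneg (norm_nonneg _) _
    calc ‖Amap ^ k‖ = (‖Amap ^ k‖ ^ (1 / (k : ℝ))) ^ (k : ℕ) := by
          rw [← Real.rpow_natCast (‖Amap ^ k‖ ^ (1 / (k:ℝ))) k, ← Real.rpow_mul (norm_nonneg _),
            one_div_mul_cancel hkne, Real.rpow_one]
      _ ≤ s' ^ k := pow_le_pow_left₀ h0 h2 k
  have hq0 : (0:ℝ) ≤ s' / s := by positivity
  have hq1 : s' / s < 1 := (div_lt_one hs0).mpr hs's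
  have hsum0 : Summable fun k : ℕ => ‖Amap ^ (k + K)‖ / s ^ (k + K + 1) := by
    refine Summable.of_nonneg_of_le (fun k => by positivity) (fun k => ?_)
      ((summable_geometric_of_lt_one hq0 hq1).mul_left (s' ^ K / s ^ (K + 1)))
    have h1 : ‖Amap ^ (k + K)‖ ≤ s' ^ (k + K) := hKbound _ (Nat.le_add_left _ _)
    calc ‖Amap ^ (k+K)‖ / s ^ (k+K+1) ≤ s' ^ (k+K) / s ^ (k+K+1) := by gcongr
      _ = s' ^ K / s ^ (K+1) * (s' / s) ^ k := by
          rw [div_pow, pow_add, pow_add, pow_add]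
          field_simp
          ring
  have hsumF : Summable fun k : ℕ => ‖Amap ^ k‖ / s ^ (k + 1) :=
    (summable_nat_add_iff K).mp hsum0
  set g : ℕ → Fin n → ℝ := fun k i => ∑ j, (A ^ k) i j with hgdef
  have hg0 : ∀ k i, 0 ≤ g k i := fun k i =>
    Finset.sum_nonneg fun j _ => pow_entry_nonneg hA0 k i j
  have hgF : ∀ k i, g k i ≤ ‖Amap ^ k‖ := by
    intro k i
    have hmm : Amap ^ k = (A ^ k).map (algebraMap ℝ ℂ) := map_pow_comm A k
    calc g k i = ∑ j, ‖((A ^ k).map (algebraMap ℝ ℂ)) i j‖ := by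
          refine Finset.sum_congr rfl fun j _ => ?_
          rw [Matrix.map_apply]
          simp [abs_of_nonneg (pow_entry_nonneg hA0 k i j)]
      _ ≤ ‖(A ^ k).map (algebraMap ℝ ℂ)‖ := row_sum_norm_le _ i
      _ = ‖Amap ^ k‖ := by rw [hmm]
  have hsumg : ∀ i, Summable fun k => g k i / s ^ (k + 1) := by
    intro i
    refine Summable.of_nonneg_of_le
      (fun k => div_nonneg (hg0 k i) (pow_nonneg hs0.le _)) (fun k => ?_) hsumF
    gcongr
    exact hgF k i
  set u : Fin n → ℝ := fun i => ∑' k, g k i / s ^ (k + 1) with hudef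
  have hu0 : ∀ i, 0 ≤ u i := fun i =>
    tsum_nonneg fun k => div_nonneg (hg0 k i) (pow_nonneg hs0.le _)
  have hgrec : ∀ k i, ∑ j, A i j * g k j = g (k + 1) i := by
    intro k i
    simp only [hgdef, Finset.mul_sum]
    rw [Finset.sum_comm]
    refine Finset.sum_congr rfl fun l _ => ?_
    rw [pow_succ', Matrix.mul_apply]
  have hAu : ∀ i, ∑ j, A i j * u j = ∑' k, g (k + 1) i / s ^ (k + 1) := by
    intro i
    calc ∑ j, A i j * u j = ∑ j, ∑' k, A i j * (g k j / s ^ (k+1)) :=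
          Finset.sum_congr rfl fun j _ => (tsum_mul_left).symm
      _ = ∑' k, ∑ j, A i j * (g k j / s ^ (k+1)) :=
          (Summable.tsum_finsetSum fun j _ => (hsumg j).mul_left _).symm
      _ = ∑' k, g (k+1) i / s ^ (k+1) := by
          refine tsum_congr fun k => ?_
          rw [← hgrec k i, Finset.sum_div]
          exact Finset.sum_congr rfl fun j _ => by ring
  have hfs : ∀ i, (fun k => g k i / s ^ k) = fun k => s * (g k i / s ^ (k+1)) := by
    intro i; funext k; rw [pow_succ]; field_simp
  have hsumg' : ∀ i, Summable fun k => g k i / s ^ k := fun i => by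
    rw [hfs i]; exact (hsumg i).mul_left s
  have hone : ∀ i, g 0 i = (1:ℝ) := by
    intro i
    simp [hgdef, Matrix.one_apply]
  have hkey : ∀ i, s * u i = 1 + ∑ j, A i j * u j := by
    intro i
    have hsu : s * u i = ∑' k, g k i / s ^ k := by
      rw [hudef, ← tsum_mul_left, hfs i]
    rw [hsu, Summable.tsum_eq_zero_add (hsumg' i), hone i, hAu i]
    norm_num
  have hΓu : ∀ i, ∑ j, Γ i j * u j = κ * u i - 1 := by
    intro i
    have hsplit : ∑ j, A i j * u j = ∑ j, Γ i j * u j + (s - κ) * u i := by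
      calc ∑ j, A i j * u j
          = ∑ j, (Γ i j * u j + (if i = j then s - κ else 0) * u j) :=
            Finset.sum_congr rfl fun j _ => by rw [hAentry]; ring
        _ = (∑ j, Γ i j * u j) + ∑ j, (if i = j then s - κ else 0) * u j :=
            Finset.sum_add_distrib
        _ = ∑ j, Γ i j * u j + (s - κ) * u i := by
            congr 1
            simp [ite_mul]
    linear_combination -(hkey i) - hsplit
  have hupos : ∀ i, 0 < u i := by
    intro i
    rcases lt_or_eq_of_le (hu0 i) with h | h
    · exact h
    · exfalso
      have h0 : u i = 0 := h.symm
      have h1 : 0 ≤ ∑ j, Γ i j * u j := by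
        refine Finset.sum_nonneg fun j _ => ?_
        by_cases hj : i = j
        · rw [← hj, h0, mul_zero]
        · exact mul_nonneg (hM i j hj) (hu0 j)
      rw [hΓu i, h0] at h1
      linarith
  exact ⟨u, hupos, fun i => by rw [hΓu i]; linarith⟩

/-! ### Auxiliary facts about norms and weak pairings -/

private lemma isNorm_nonneg {m : ℕ} {ν : (Fin m → ℝ) → ℝ} (hν : IsNorm ν)
    (x : Fin m → ℝ) : 0 ≤ ν x := by
  have h0 : ν 0 = 0 := by
    have := hν.homog 0 0
    simpa using this
  have hneg : ν (-x) = ν x := by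
    have := hν.homog (-1) x
    simpa using this
  have htri := hν.triangle x (-x)
  rw [add_neg_cancel, h0, hneg] at htri
  linarith

private lemma pairing_le_mul {m : ℕ} {ν : (Fin m → ℝ) → ℝ}
    {P : (Fin m → ℝ) → (Fin m → ℝ) → ℝ} (hν : IsNorm ν) (hP : IsWeakPairing P)
    (hc : Compatible ν P) (x y : Fin m → ℝ) : P x y ≤ ν x * ν y := by
  have h := hP.cauchySchwarz x y
  have hx : Real.sqrt (P x x) = ν x := by rw [hc x, Real.sqrt_sq (isNorm_nonneg hν x)]
  have hy : Real.sqrt (P y y) = ν y := by rw [hc y, Real.sqrt_sq (isNorm_nonneg hν y)]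
  rw [hx, hy] at h
  exact (le_abs_self _).trans h

/-! ### The weighted quadratic-form bound -/

private lemma quad_bound {n : ℕ} (Γ : Matrix (Fin n) (Fin n) ℝ) (κ : ℝ)
    (hM : ∀ i j, i ≠ j → 0 ≤ Γ i j) (v w : Fin n → ℝ)
    (hv : ∀ i, 0 < v i) (hw : ∀ i, 0 < w i)
    (hΓv : ∀ i, ∑ j, Γ i j * v j ≤ κ * v i)
    (hΓw : ∀ j, ∑ i, Γ i j * w i ≤ κ * w j)
    (a : Fin n → ℝ) (ha : ∀ i, 0 ≤ a i) :
    ∑ i, ∑ j, (w i / v i) * Γ i j * a i * a j ≤ κ * ∑ i, (w i / v i) * a i ^ 2 := by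
  have hvne : ∀ i, v i ≠ 0 := fun i => (hv i).ne'
  set b : Fin n → ℝ := fun i => a i / v i with hbdef
  set C : Fin n → Fin n → ℝ := fun i j => w i * Γ i j * v j with hCdef
  have step1 : ∀ i j, (w i / v i) * Γ i j * a i * a j = C i j * (b i * b j) := by
    intro i j
    have h1 := hvne i
    have h2 := hvne j
    simp only [hCdef, hbdef]
    field_simp
  have key : ∀ i j, C i j * (b i * b j) ≤ C i j * ((b i ^ 2 + b j ^ 2) / 2) := by
    intro i j
    by_cases h : i = j
    · subst h; apply le_of_eq; ring
    · have hC0 : 0 ≤ C i j := mul_nonneg (mul_nonneg (hw i).le (hM i j h)) (hv j).le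
      refine mul_le_mul_of_nonneg_left ?_ hC0
      nlinarith [sq_nonneg (b i - b j)]
  have hrow : ∀ i, ∑ j, C i j ≤ κ * (w i * v i) := by
    intro i
    have h1 : ∑ j, C i j = w i * ∑ j, Γ i j * v j := by
      rw [Finset.mul_sum]; exact Finset.sum_congr rfl fun j _ => by simp only [hCdef]; ring
    rw [h1]
    calc w i * ∑ j, Γ i j * v j ≤ w i * (κ * v i) :=
          mul_le_mul_of_nonneg_left (hΓv i) (hw i).le
      _ = κ * (w i * v i) := by ring
  have hcol : ∀ j, ∑ i, C i j ≤ κ * (w j * v j) := by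
    intro j
    have h1 : ∑ i, C i j = v j * ∑ i, Γ i j * w i := by
      rw [Finset.mul_sum]; exact Finset.sum_congr rfl fun i _ => by simp only [hCdef]; ring
    rw [h1]
    calc v j * ∑ i, Γ i j * w i ≤ v j * (κ * w j) :=
          mul_le_mul_of_nonneg_left (hΓw j) (hv j).le
      _ = κ * (w j * v j) := by ring
  have hb2 : ∀ i, (0:ℝ) ≤ b i ^ 2 / 2 := fun i => by positivity
  have hrhs : ∀ i, (w i / v i) * a i ^ 2 = w i * v i * b i ^ 2 := by
    intro i
    have h1 := hvne i
    simp only [hbdef]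
    field_simp
  calc ∑ i, ∑ j, (w i / v i) * Γ i j * a i * a j
      = ∑ i, ∑ j, C i j * (b i * b j) :=
        Finset.sum_congr rfl fun i _ => Finset.sum_congr rfl fun j _ => step1 i j
    _ ≤ ∑ i, ∑ j, C i j * ((b i ^ 2 + b j ^ 2) / 2) :=
        Finset.sum_le_sum fun i _ => Finset.sum_le_sum fun j _ => key i j
    _ = (∑ i, ∑ j, C i j * b i ^ 2 / 2) + ∑ i, ∑ j, C i j * b j ^ 2 / 2 := by
        rw [← Finset.sum_add_distrib]
        refine Finset.sum_congr rfl fun i _ => ?_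
        rw [← Finset.sum_add_distrib]
        exact Finset.sum_congr rfl fun j _ => by ring
    _ = (∑ i, b i ^ 2 / 2 * ∑ j, C i j) + ∑ j, b j ^ 2 / 2 * ∑ i, C i j := by
        congr 1
        · refine Finset.sum_congr rfl fun i _ => ?_
          rw [Finset.mul_sum]
          exact Finset.sum_congr rfl fun j _ => by ring
        · rw [Finset.sum_comm]
          refine Finset.sum_congr rfl fun j _ => ?_
          rw [Finset.mul_sum]
          exact Finset.sum_congr rfl fun i _ => by ring
    _ ≤ (∑ i, b i ^ 2 / 2 * (κ * (w i * v i))) + ∑ j, b j ^ 2 / 2 * (κ * (w j * v j)) :=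
        add_le_add
          (Finset.sum_le_sum fun i _ => mul_le_mul_of_nonneg_left (hrow i) (hb2 i))
          (Finset.sum_le_sum fun j _ => mul_le_mul_of_nonneg_left (hcol j) (hb2 j))
    _ = κ * ∑ i, w i * v i * b i ^ 2 := by
        rw [Finset.mul_sum, ← Finset.sum_add_distrib]
        exact Finset.sum_congr rfl fun i _ => by ring
    _ = κ * ∑ i, (w i / v i) * a i ^ 2 := by
        rw [Finset.sum_congr rfl fun i _ => (hrhs i)]

/-! ### Spectrum helpers -/

private lemma spectrum_transpose_eq {n : ℕ} (Γ : Matrix (Fin n) (Fin n) ℝ) :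
    spectrum ℂ (Γ.transpose.map (algebraMap ℝ ℂ)) = spectrum ℂ (Γ.map (algebraMap ℝ ℂ)) := by
  have h : Γ.transpose.map (algebraMap ℝ ℂ) = (Γ.map (algebraMap ℝ ℂ)).transpose := rfl
  rw [h]
  ext μ
  simp only [spectrum.mem_iff, not_iff_not, Matrix.isUnit_iff_isUnit_det]
  have h2 : algebraMap ℂ (Matrix (Fin n) (Fin n) ℂ) μ - (Γ.map (algebraMap ℝ ℂ)).transpose
      = (algebraMap ℂ (Matrix (Fin n) (Fin n) ℂ) μ - Γ.map (algebraMap ℝ ℂ)).transpose := by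
    rw [Matrix.transpose_sub]
    congr 1
    rw [Matrix.algebraMap_eq_diagonal, Matrix.diagonal_transpose]
  rw [h2, Matrix.det_transpose]

private lemma specAbscissa_facts {n : ℕ} (hn : 0 < n) (Γ : Matrix (Fin n) (Fin n) ℝ) :
    ∀ μ ∈ spectrum ℂ (Γ.map (algebraMap ℝ ℂ)), μ.re ≤ specAbscissa Γ := by
  haveI : NeZero n := ⟨hn.ne'⟩
  have hcp : IsCompact (spectrum ℂ (Γ.map (algebraMap ℝ ℂ))) := spectrum.isCompact _
  have himg : IsCompact (Complex.re '' spectrum ℂ (Γ.map (algebraMap ℝ ℂ))) :=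
    hcp.image Complex.continuous_re
  intro μ hμ
  exact le_csSup himg.bddAbove ⟨μ, hμ, rfl⟩

/-! ### Irreducible case: limit of the resolvent vectors -/

private lemma irr_transpose {n : ℕ} {Γ : Matrix (Fin n) (Fin n) ℝ}
    (h : MatrixIrreducible Γ) : MatrixIrreducible Γ.transpose := by
  intro S hS1 hS2
  have h1 : Sᶜ.Nonempty := Set.nonempty_compl.mpr hS2
  have h2 : Sᶜ ≠ Set.univ := by
    rw [Ne, Set.compl_univ_iff]
    exact hS1.ne_empty
  obtain ⟨i, hiS, j, hjS, hΓij⟩ := h Sᶜ h1 h2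
  exact ⟨j, Set.not_notMem.mp hjS, i, hiS, by simpa [Matrix.transpose_apply] using hΓij⟩

set_option maxHeartbeats 800000 in
private lemma irred_vec {n : ℕ} (hn : 0 < n) (Γ : Matrix (Fin n) (Fin n) ℝ) (α : ℝ)
    (hM : ∀ i j, i ≠ j → 0 ≤ Γ i j) (hirr : MatrixIrreducible Γ)
    (hspec : ∀ μ ∈ spectrum ℂ (Γ.map (algebraMap ℝ ℂ)), μ.re ≤ α) :
    ∃ v : Fin n → ℝ, (∀ i, 0 < v i) ∧ ∀ i, ∑ j, Γ i j * v j ≤ α * v i := by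
  haveI : Nonempty (Fin n) := Fin.pos_iff_nonempty.mp hn
  set K : ℕ → Set (Fin n → ℝ) := fun k =>
    {v | (∀ i, 0 ≤ v i) ∧ (∑ i, v i = 1) ∧
      ∀ i, ∑ j, Γ i j * v j ≤ (α + 1 / ((k : ℝ) + 1)) * v i} with hKdef
  have hKne : ∀ k, (K k).Nonempty := by
    intro k
    have hpos : (0:ℝ) < 1 / ((k : ℝ) + 1) := by positivity
    obtain ⟨u, hu, hΓu⟩ := metzler_resolvent hn Γ (α + 1 / ((k : ℝ) + 1)) hM
      (fun μ hμ => lt_of_le_of_lt (hspec μ hμ) (by linarith))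
    have hc : (0:ℝ) < ∑ i, u i := Finset.sum_pos (fun i _ => hu i) Finset.univ_nonempty
    refine ⟨fun i => u i / (∑ i, u i), fun i => (div_pos (hu i) hc).le, ?_, ?_⟩
    · rw [← Finset.sum_div, div_self hc.ne']
    · intro i
      calc ∑ j, Γ i j * (u j / (∑ i, u i)) = (∑ j, Γ i j * u j) / (∑ i, u i) := by
            rw [Finset.sum_div]
            exact Finset.sum_congr rfl fun j _ => by ring
        _ ≤ ((α + 1 / ((k : ℝ) + 1)) * u i) / (∑ i, u i) := by
            gcongr
            exact (hΓu i).le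
        _ = (α + 1 / ((k : ℝ) + 1)) * (u i / (∑ i, u i)) := by ring
  have hKsub : ∀ k, K (k + 1) ⊆ K k := by
    intro k v hv
    obtain ⟨h1, h2, h3⟩ := hv
    refine ⟨h1, h2, fun i => (h3 i).trans ?_⟩
    have : 1 / ((k : ℝ) + 1 + 1) ≤ 1 / ((k : ℝ) + 1) := by
      apply one_div_le_one_div_of_le <;> linarith
    have hcast : ((k + 1 : ℕ) : ℝ) = (k : ℝ) + 1 := by push_cast; ring
    rw [hcast]
    exact mul_le_mul_of_nonneg_right (by linarith) (h1 i)
  have hKcl : ∀ k, IsClosed (K k) := by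
    intro k
    have e1 : IsClosed {v : Fin n → ℝ | ∀ i, 0 ≤ v i} := by
      have : {v : Fin n → ℝ | ∀ i, 0 ≤ v i} = ⋂ i, {v | 0 ≤ v i} := by
        ext v; simp [Set.mem_iInter]
      rw [this]
      exact isClosed_iInter fun i => isClosed_le continuous_const (continuous_apply i)
    have e2 : IsClosed {v : Fin n → ℝ | ∑ i, v i = 1} :=
      isClosed_eq (continuous_finset_sum _ fun i _ => continuous_apply i) continuous_const
    have e3 : IsClosed {v : Fin n → ℝ |
        ∀ i, ∑ j, Γ i j * v j ≤ (α + 1 / ((k : ℝ) + 1)) * v i} := by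
      have : {v : Fin n → ℝ | ∀ i, ∑ j, Γ i j * v j ≤ (α + 1 / ((k : ℝ) + 1)) * v i}
          = ⋂ i, {v | ∑ j, Γ i j * v j ≤ (α + 1 / ((k : ℝ) + 1)) * v i} := by
        ext v; simp [Set.mem_iInter]
      rw [this]
      exact isClosed_iInter fun i => isClosed_le
        (continuous_finset_sum _ fun j _ => continuous_const.mul (continuous_apply j))
        (continuous_const.mul (continuous_apply i))
    have : K k = {v : Fin n → ℝ | ∀ i, 0 ≤ v i} ∩ ({v | ∑ i, v i = 1} ∩
        {v | ∀ i, ∑ j, Γ i j * v j ≤ (α + 1 / ((k : ℝ) + 1)) * v i}) := by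
      ext v
      simp only [hKdef, Set.mem_setOf_eq, Set.mem_inter_iff]
    rw [this]
    exact e1.inter (e2.inter e3)
  have hKcp : IsCompact (K 0) := by
    refine IsCompact.of_isClosed_subset
      (isCompact_univ_pi fun _ : Fin n => isCompact_Icc (a := (0:ℝ)) (b := 1))
      (hKcl 0) ?_
    intro v hv
    obtain ⟨h1, h2, _⟩ := hv
    rw [Set.mem_univ_pi]
    intro i
    refine ⟨h1 i, ?_⟩
    rw [← h2]
    exact Finset.single_le_sum (fun j _ => h1 j) (Finset.mem_univ i)
  obtain ⟨v, hv⟩ := IsCompact.nonempty_iInter_of_sequence_nonempty_isCompact_isClosed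
    K hKsub hKne hKcp hKcl
  rw [Set.mem_iInter] at hv
  have h1 : ∀ i, 0 ≤ v i := (hv 0).1
  have h2 : ∑ i, v i = 1 := (hv 0).2.1
  have h3 : ∀ i, ∑ j, Γ i j * v j ≤ α * v i := by
    intro i
    have ht : Filter.Tendsto (fun k : ℕ => α + 1 / ((k : ℝ) + 1)) Filter.atTop (nhds α) := by
      have h := Filter.Tendsto.add
        (tendsto_const_nhds : Filter.Tendsto (fun _ : ℕ => α) Filter.atTop (nhds α))
        tendsto_one_div_add_atTop_nhds_zero_nat
      simpa using h
    have hlim : Filter.Tendsto (fun k : ℕ => (α + 1 / ((k : ℝ) + 1)) * v i)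
        Filter.atTop (nhds (α * v i)) := ht.mul_const (v i)
    exact ge_of_tendsto hlim (Filter.Eventually.of_forall fun k => (hv k).2.2 i)
  -- positivity from irreducibility
  have hpos : ∀ i, 0 < v i := by
    by_contra hcon
    push_neg at hcon
    obtain ⟨i₀, hi₀⟩ := hcon
    have hi₀0 : v i₀ = 0 := le_antisymm hi₀ (h1 i₀)
    set Z : Set (Fin n) := {i | v i = 0} with hZdef
    have hZne : Z.Nonempty := ⟨i₀, hi₀0⟩
    have hZnu : Z ≠ Set.univ := by
      intro hZu
      have : ∀ i, v i = 0 := fun i => by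
        have : i ∈ Z := hZu ▸ Set.mem_univ i
        exact this
      rw [Finset.sum_congr rfl fun i _ => this i] at h2
      simp at h2
    obtain ⟨i, hiZ, j, hjZ, hΓij⟩ := hirr Z hZne hZnu
    have hvi : v i = 0 := hiZ
    have hij : i ≠ j := fun h => hjZ (h ▸ hiZ)
    have hvj : 0 < v j := lt_of_le_of_ne (h1 j) fun h => hjZ h.symm
    have hsum : 0 < ∑ l, Γ i l * v l := by
      refine Finset.sum_pos' (fun l _ => ?_) ⟨j, Finset.mem_univ j, ?_⟩
      · by_cases hl : i = l
        · rw [← hl, hvi, mul_zero]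
        · exact mul_nonneg (hM i l hl) (h1 l)
      · exact mul_pos (lt_of_le_of_ne (hM i j hij) (Ne.symm hΓij)) hvj
    have := h3 i
    rw [hvi] at this
    simp at this
    linarith
  exact ⟨v, hpos, h3⟩

/-! ### Per-subsystem estimate and assembly -/

private lemma subsys_bound {n : ℕ} {N : Fin n → ℕ}
    {f : ∀ i, ℝ → (∀ j, Fin (N j) → ℝ) → Fin (N i) → ℝ}
    {ν : ∀ i, (Fin (N i) → ℝ) → ℝ}
    {P : ∀ i, (Fin (N i) → ℝ) → (Fin (N i) → ℝ) → ℝ}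
    {c : Fin n → ℝ} {γ : Fin n → Fin n → ℝ}
    (hν : ∀ i, IsNorm (ν i)) (hP : ∀ i, IsWeakPairing (P i))
    (hcomp : ∀ i, Compatible (ν i) (P i))
    (hC1 : ∀ i, ∀ t, 0 ≤ t → ∀ x y : ∀ j, Fin (N j) → ℝ,
      (∀ j, j ≠ i → x j = y j) →
      P i (f i t x - f i t y) (x i - y i) ≤ -(c i) * ν i (x i - y i) ^ 2)
    (hC2 : ∀ i, ∀ t, 0 ≤ t → ∀ x y : ∀ j, Fin (N j) → ℝ, x i = y i →
      ν i (f i t x - f i t y) ≤ ∑ j ∈ Finset.univ.erase i, γ i j * ν j (x j - y j))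
    (i : Fin n) (t : ℝ) (ht : 0 ≤ t) (x y : ∀ j, Fin (N j) → ℝ) :
    P i (f i t x - f i t y) (x i - y i) ≤
      -(c i) * ν i (x i - y i) ^ 2
        + (∑ j ∈ Finset.univ.erase i, γ i j * ν j (x j - y j)) * ν i (x i - y i) := by
  classical
  set w : ∀ j, Fin (N j) → ℝ := Function.update x i (y i) with hwdef
  have hwi : w i = y i := Function.update_self i (y i) x
  have hwj : ∀ j, j ≠ i → w j = x j := fun j hj => Function.update_of_ne hj (y i) x
  have hsplit : f i t x - f i t y = (f i t x - f i t w) + (f i t w - f i t y) :=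
    (sub_add_sub_cancel _ _ _).symm
  have h1 := (hP i).subadd (f i t x - f i t w) (f i t w - f i t y) (x i - y i)
  have hA : P i (f i t x - f i t w) (x i - y i) ≤ -(c i) * ν i (x i - y i) ^ 2 := by
    have h := hC1 i t ht x w (fun j hj => (hwj j hj).symm)
    rw [hwi] at h
    exact h
  have hB : P i (f i t w - f i t y) (x i - y i) ≤
      (∑ j ∈ Finset.univ.erase i, γ i j * ν j (x j - y j)) * ν i (x i - y i) := by
    have hcs := pairing_le_mul (hν i) (hP i) (hcomp i) (f i t w - f i t y) (x i - y i)
    have hC2' := hC2 i t ht w y hwi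
    have heq : ∀ j ∈ Finset.univ.erase i,
        γ i j * ν j (w j - y j) = γ i j * ν j (x j - y j) := fun j hj => by
      rw [hwj j (Finset.mem_erase.mp hj).1]
    rw [Finset.sum_congr rfl heq] at hC2'
    calc P i (f i t w - f i t y) (x i - y i)
        ≤ ν i (f i t w - f i t y) * ν i (x i - y i) := hcs
      _ ≤ (∑ j ∈ Finset.univ.erase i, γ i j * ν j (x j - y j)) * ν i (x i - y i) :=
          mul_le_mul_of_nonneg_right hC2' (isNorm_nonneg (hν i) _)
  calc P i (f i t x - f i t y) (x i - y i)
      = P i ((f i t x - f i t w) + (f i t w - f i t y)) (x i - y i) := by rw [← hsplit]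
    _ ≤ P i (f i t x - f i t w) (x i - y i) + P i (f i t w - f i t y) (x i - y i) := h1
    _ ≤ _ := add_le_add hA hB

private lemma assemble {n : ℕ} {N : Fin n → ℕ}
    {f : ∀ i, ℝ → (∀ j, Fin (N j) → ℝ) → Fin (N i) → ℝ}
    {ν : ∀ i, (Fin (N i) → ℝ) → ℝ}
    {P : ∀ i, (Fin (N i) → ℝ) → (Fin (N i) → ℝ) → ℝ}
    {c : Fin n → ℝ} {γ : Fin n → Fin n → ℝ} {Γ : Matrix (Fin n) (Fin n) ℝ}
    (hν : ∀ i, IsNorm (ν i)) (hP : ∀ i, IsWeakPairing (P i))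
    (hcomp : ∀ i, Compatible (ν i) (P i))
    (hγ : ∀ i j, i ≠ j → 0 ≤ γ i j)
    (hC1 : ∀ i, ∀ t, 0 ≤ t → ∀ x y : ∀ j, Fin (N j) → ℝ,
      (∀ j, j ≠ i → x j = y j) →
      P i (f i t x - f i t y) (x i - y i) ≤ -(c i) * ν i (x i - y i) ^ 2)
    (hC2 : ∀ i, ∀ t, 0 ≤ t → ∀ x y : ∀ j, Fin (N j) → ℝ, x i = y i →
      ν i (f i t x - f i t y) ≤ ∑ j ∈ Finset.univ.erase i, γ i j * ν j (x j - y j))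
    (hΓ : ∀ i j, Γ i j = if i = j then -(c i) else γ i j)
    (κ : ℝ) (v w : Fin n → ℝ) (hv : ∀ i, 0 < v i) (hw : ∀ i, 0 < w i)
    (hΓv : ∀ i, ∑ j, Γ i j * v j ≤ κ * v i)
    (hΓw : ∀ j, ∑ i, Γ i j * w i ≤ κ * w j) :
    ∃ ξ : Fin n → ℝ, (∀ i, 0 < ξ i) ∧
      ∀ t, 0 ≤ t → ∀ x y : ∀ j, Fin (N j) → ℝ,
        ∑ i, ξ i * P i (f i t x - f i t y) (x i - y i)
          ≤ κ * ∑ i, ξ i * ν i (x i - y i) ^ 2 := by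
  have hM : ∀ i j, i ≠ j → 0 ≤ Γ i j := fun i j h => by
    rw [hΓ i j, if_neg h]; exact hγ i j h
  refine ⟨fun i => w i / v i, fun i => div_pos (hw i) (hv i), fun t ht x y => ?_⟩
  set a : Fin n → ℝ := fun i => ν i (x i - y i) with hadef
  have ha : ∀ i, 0 ≤ a i := fun i => isNorm_nonneg (hν i) _
  have hD : ∀ i, P i (f i t x - f i t y) (x i - y i) ≤ ∑ j, Γ i j * a i * a j := by
    intro i
    have hsb := subsys_bound hν hP hcomp hC1 hC2 i t ht x y
    have hsum : ∑ j, Γ i j * a i * a j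
        = -(c i) * a i ^ 2 + (∑ j ∈ Finset.univ.erase i, γ i j * a j) * a i := by
      rw [← Finset.add_sum_erase _ _ (Finset.mem_univ i)]
      congr 1
      · rw [hΓ i i, if_pos rfl]; ring
      · rw [Finset.sum_mul]
        refine Finset.sum_congr rfl fun j hj => ?_
        rw [hΓ i j, if_neg (Ne.symm (Finset.mem_erase.mp hj).1)]
        ring
    rw [hsum]
    exact hsb
  calc ∑ i, (w i / v i) * P i (f i t x - f i t y) (x i - y i)
      ≤ ∑ i, (w i / v i) * ∑ j, Γ i j * a i * a j :=
        Finset.sum_le_sum fun i _ =>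
          mul_le_mul_of_nonneg_left (hD i) (div_pos (hw i) (hv i)).le
    _ = ∑ i, ∑ j, (w i / v i) * Γ i j * a i * a j := by
        refine Finset.sum_congr rfl fun i _ => ?_
        rw [Finset.mul_sum]
        exact Finset.sum_congr rfl fun j _ => by ring
    _ ≤ κ * ∑ i, (w i / v i) * a i ^ 2 := quad_bound Γ κ hM v w hv hw hΓv hΓw a ha

/-- Theorem 44 (contractivity of interconnected systems): if the gain matrix
`Γ` is Hurwitz, the interconnection is strongly contracting with rate
`|α(Γ) + ε|` with respect to a suitable diagonally weighted aggregation norm;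
if `Γ` is irreducible, one may take `ε = 0`. -/
theorem interconnection_contractivity {n : ℕ} (N : Fin n → ℕ)
    (f : ∀ i, ℝ → (∀ j, Fin (N j) → ℝ) → Fin (N i) → ℝ)
    (ν : ∀ i, (Fin (N i) → ℝ) → ℝ)
    (P : ∀ i, (Fin (N i) → ℝ) → (Fin (N i) → ℝ) → ℝ)
    (c : Fin n → ℝ) (γ : Fin n → Fin n → ℝ) (Γ : Matrix (Fin n) (Fin n) ℝ)
    -- each subsystem vector field is continuous
    (hf : ∀ i, Continuous fun p : ℝ × (∀ j, Fin (N j) → ℝ) => f i p.1 p.2)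
    -- norms and compatible weak pairings on each block
    (hν : ∀ i, IsNorm (ν i)) (hP : ∀ i, IsWeakPairing (P i))
    (hcomp : ∀ i, Compatible (ν i) (P i))
    (hc : ∀ i, 0 < c i) (hγ : ∀ i j, i ≠ j → 0 ≤ γ i j)
    -- (C1) each subsystem is strongly contracting in its own state
    (hC1 : ∀ i, ∀ t, 0 ≤ t → ∀ x y : ∀ j, Fin (N j) → ℝ,
      (∀ j, j ≠ i → x j = y j) →
      P i (f i t x - f i t y) (x i - y i) ≤ -(c i) * ν i (x i - y i) ^ 2)
    -- (C2) Lipschitz dependence on the other states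
    (hC2 : ∀ i, ∀ t, 0 ≤ t → ∀ x y : ∀ j, Fin (N j) → ℝ, x i = y i →
      ν i (f i t x - f i t y) ≤ ∑ j ∈ Finset.univ.erase i, γ i j * ν j (x j - y j))
    -- the gain matrix
    (hΓ : ∀ i j, Γ i j = if i = j then -(c i) else γ i j)
    -- `Γ` is Hurwitz
    (hHurwitz : ∀ μ ∈ spectrum ℂ (Γ.map (algebraMap ℝ ℂ)), μ.re < 0) :
    -- strong contraction with rate `|α(Γ) + ε|`
    (∀ ε ∈ Set.Ioo (0 : ℝ) (-specAbscissa Γ), ∃ ξ : Fin n → ℝ,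
      (∀ i, 0 < ξ i) ∧
      ∀ t, 0 ≤ t → ∀ x y : ∀ j, Fin (N j) → ℝ,
        ∑ i, ξ i * P i (f i t x - f i t y) (x i - y i)
          ≤ (specAbscissa Γ + ε) * ∑ i, ξ i * ν i (x i - y i) ^ 2) ∧
    -- irreducible case: `ε = 0`
    (MatrixIrreducible Γ → ∃ ξ : Fin n → ℝ,
      (∀ i, 0 < ξ i) ∧
      ∀ t, 0 ≤ t → ∀ x y : ∀ j, Fin (N j) → ℝ,
        ∑ i, ξ i * P i (f i t x - f i t y) (x i - y i)
          ≤ specAbscissa Γ * ∑ i, ξ i * ν i (x i - y i) ^ 2) := by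
  have hM : ∀ i j, i ≠ j → 0 ≤ Γ i j := fun i j h => by
    rw [hΓ i j, if_neg h]; exact hγ i j h
  rcases Nat.eq_zero_or_pos n with hn | hn
  · -- the degenerate case `n = 0`
    subst hn
    have hspec_empty : spectrum ℂ (Γ.map (algebraMap ℝ ℂ)) = ∅ := by
      ext μ
      simp [spectrum.mem_iff, isUnit_of_subsingleton]
    have hzero : specAbscissa Γ = 0 := by
      rw [specAbscissa, hspec_empty]
      simp [Real.sSup_empty]
    constructor
    · intro ε hε
      exfalso
      rw [hzero] at hε
      have := hε.1.trans hε.2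
      norm_num at this
    · intro _
      refine ⟨fun _ => 1, fun i => one_pos, fun t ht x y => ?_⟩
      simp
  · -- the main case `n ≥ 1`
    have hub := specAbscissa_facts hn Γ
    have hspecT := spectrum_transpose_eq Γ
    have hMT : ∀ i j, i ≠ j → 0 ≤ Γ.transpose i j := fun i j h => hM j i (Ne.symm h)
    constructor
    · intro ε hε
      have hκ : ∀ μ ∈ spectrum ℂ (Γ.map (algebraMap ℝ ℂ)), μ.re < specAbscissa Γ + ε :=
        fun μ hμ => lt_of_le_of_lt (hub μ hμ) (lt_add_of_pos_right _ hε.1)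
      obtain ⟨v, hv, hΓv⟩ := metzler_resolvent hn Γ (specAbscissa Γ + ε) hM hκ
      obtain ⟨w, hw, hΓw⟩ := metzler_resolvent hn Γ.transpose (specAbscissa Γ + ε) hMT
        (by rw [hspecT]; exact hκ)
      exact assemble hν hP hcomp hγ hC1 hC2 hΓ (specAbscissa Γ + ε) v w hv hw
        (fun i => (hΓv i).le)
        (fun j => by simpa [Matrix.transpose_apply] using (hΓw j).le)
    · intro hirr
      obtain ⟨v, hv, hΓv⟩ := irred_vec hn Γ (specAbscissa Γ) hM hirr hub
      obtain ⟨w, hw, hΓw⟩ := irred_vec hn Γ.transpose (specAbscissa Γ) hMT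
        (irr_transpose hirr) (by rw [hspecT]; exact hub)
      exact assemble hν hP hcomp hγ hC1 hC2 hΓ (specAbscissa Γ) v w hv hw hΓv
        (fun j => by simpa [Matrix.transpose_apply] using hΓw j)
end

section
/- If ⟦·,·⟧ is a weak pairing on ℝⁿ, then the map x ↦ ⟦x,x⟧^{1/2} is a norm on ℝⁿ. -/
open Filter Topology MeasureTheory

/-- Theorem 15 (compatibility of weak pairings with norms), first part:
if `P` is a weak pairing on `ℝⁿ`, then `x ↦ ⟦x,x⟧^{1/2}` is a norm. -/
theorem weak_pairing_gives_norm {n : ℕ}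
    (P : (Fin n → ℝ) → (Fin n → ℝ) → ℝ) (hP : IsWeakPairing P) :
    IsNorm (fun x => Real.sqrt (P x x)) := by
  have hzero : P 0 0 = 0 := by
    have := hP.homog_left 0 le_rfl 0 0
    simpa using this
  have hnonneg : ∀ x, 0 ≤ P x x := by
    intro x
    by_cases hx : x = 0
    · simp [hx, hzero]
    · exact (hP.posdef x hx).le
  constructor
  · intro x hx
    exact Real.sqrt_pos.mpr (hP.posdef x hx)
  · intro a x
    by_cases ha : 0 ≤ a
    · rw [hP.homog_left a ha, hP.homog_right a ha, ← mul_assoc,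
        Real.sqrt_mul (mul_self_nonneg a), Real.sqrt_mul_self_eq_abs]
    · push_neg at ha
      have hax : a • x = (-a) • (-x) := by simp
      rw [hax, hP.homog_left (-a) (by linarith), hP.homog_right (-a) (by linarith),
        hP.neg_neg, ← mul_assoc, Real.sqrt_mul (mul_self_nonneg (-a)),
        Real.sqrt_mul_self_eq_abs, abs_neg]
  · intro x y
    set s := Real.sqrt (P (x + y) (x + y)) with hs
    have key : P (x + y) (x + y) ≤ (Real.sqrt (P x x) + Real.sqrt (P y y)) * s := by
      calc P (x + y) (x + y) ≤ P x (x + y) + P y (x + y) := hP.subadd x y (x + y)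
        _ ≤ Real.sqrt (P x x) * s + Real.sqrt (P y y) * s := by
            gcongr
            · exact le_trans (le_abs_self _) (hP.cauchySchwarz x (x + y))
            · exact le_trans (le_abs_self _) (hP.cauchySchwarz y (x + y))
        _ = (Real.sqrt (P x x) + Real.sqrt (P y y)) * s := by ring
    have hs2 : s * s = P (x + y) (x + y) := Real.mul_self_sqrt (hnonneg _)
    rcases eq_or_lt_of_le (Real.sqrt_nonneg (P (x + y) (x + y))) with h0 | h0
    · have hs0 : s = 0 := h0.symm
      rw [hs0]; positivity
    · have : s * s ≤ (Real.sqrt (P x x) + Real.sqrt (P y y)) * s := by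
        rw [hs2]; exact key
      exact le_of_mul_le_mul_right (by simpa [mul_comm] using this) h0
end

section
/- Let R ∈ ℝⁿˣⁿ be invertible and let x : (a,b) → ℝⁿ be differentiable. Then: (i) D⁺‖x(t)‖_{1,R} = sign(Rx(t))ᵀ Rẋ(t) for almost every t ∈ (a,b); and (ii) ‖x(t)‖_{1,R} · D⁺‖x(t)‖_{1,R} = ⟦ẋ(t), x(t)⟧_{1,R} for almost every t ∈ (a,b), where ⟦u,v⟧_{1,R} = ‖Rv‖₁ · sign(Rv)ᵀ Ru is the sign pairing. -/
open Filter Topology MeasureTheory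

/-- The weighted `ℓ₁` norm `‖x‖_{1,R} = ‖Rx‖₁`. -/
noncomputable def ellOneNorm {n : ℕ} (R : Matrix (Fin n) (Fin n) ℝ)
    (x : Fin n → ℝ) : ℝ :=
  ∑ i, |R.mulVec x i|

/-- The sign pairing `⟦u,v⟧_{1,R} = ‖Rv‖₁ · sign(Rv)ᵀ Ru`. -/
noncomputable def signPairing {n : ℕ} (R : Matrix (Fin n) (Fin n) ℝ)
    (u v : Fin n → ℝ) : ℝ :=
  (∑ i, |R.mulVec v i|) * ∑ i, Real.sign (R.mulVec v i) * R.mulVec u i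

section AuxLemmas
open Set Filter Topology MeasureTheory

lemma DiniUpper_eq_of_hasDerivAt {φ : ℝ → ℝ} {d t : ℝ} (h : HasDerivAt φ d t) :
    DiniUpper φ t = d := by
  have h1 := h.tendsto_slope_zero_right
  have h2 : Tendsto (fun h : ℝ => (φ (t + h) - φ t) / h) (𝓝[>] 0) (𝓝 d) := by
    refine h1.congr fun s => ?_
    simp [div_eq_inv_mul, smul_eq_mul]
  exact h2.limsup_eq

/-- isolated points of a set of reals are countable -/
lemma countable_non_accPt (E : Set ℝ) : {t ∈ E | ¬ AccPt t (𝓟 E)}.Countable := by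
  have key : ∀ t ∈ {t ∈ E | ¬ AccPt t (𝓟 E)}, ∃ q : ℚ × ℚ,
      t ∈ Ioo (q.1 : ℝ) q.2 ∧ E ∩ Ioo (q.1 : ℝ) q.2 ⊆ {t} := by
    rintro t ⟨htE, hacc⟩
    rw [accPt_iff_nhds] at hacc
    push_neg at hacc
    obtain ⟨U, hU, hUs⟩ := hacc
    obtain ⟨ε, hε, hball⟩ := Metric.mem_nhds_iff.mp hU
    obtain ⟨q1, hq1, hq1'⟩ := exists_rat_btwn (show t - ε < t by linarith)
    obtain ⟨q2, hq2, hq2'⟩ := exists_rat_btwn (show t < t + ε by linarith)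
    refine ⟨(q1, q2), ⟨hq1', hq2⟩, ?_⟩
    rintro y ⟨hyE, hy1, hy2⟩
    by_contra hyt
    refine hyt (hUs y ⟨hball ?_, hyE⟩)
    simp only [Metric.mem_ball, Real.dist_eq, abs_lt]
    constructor <;> linarith
  choose! f hf1 hf2 using key
  have : Set.InjOn f {t ∈ E | ¬ AccPt t (𝓟 E)} := by
    intro s hs u hu hsu
    have h1 : s ∈ E ∩ Ioo ((f u).1 : ℝ) (f u).2 := ⟨hs.1, hsu ▸ hf1 s hs⟩
    have := hf2 u hu h1
    simpa using this
  exact countable_iff_exists_injOn.mpr ⟨fun t => Encodable.encode (f t),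
    fun s hs u hu h => this hs hu (Encodable.encode_injective h)⟩

lemma deriv_zero_of_accPt {f : ℝ → ℝ} {d t : ℝ} (hf : HasDerivAt f d t)
    (ht : f t = 0) (hacc : AccPt t (𝓟 {s | f s = 0})) : d = 0 := by
  set E : Set ℝ := {s | f s = 0}
  have hne : (𝓝[E \ {t}] t).NeBot := by
    rw [AccPt] at hacc
    have hEq : E \ {t} = {t}ᶜ ∩ E := by rw [Set.diff_eq, Set.inter_comm]
    rw [hEq, nhdsWithin_inter']
    exact hacc
  have h1 : Tendsto (slope f t) (𝓝[E \ {t}] t) (𝓝 d) :=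
    (hasDerivAt_iff_tendsto_slope.mp hf).mono_left
      (nhdsWithin_mono t (by intro s hs; exact hs.2))
  have h2 : Tendsto (slope f t) (𝓝[E \ {t}] t) (𝓝 0) := by
    have : ∀ᶠ s in 𝓝[E \ {t}] t, slope f t s = 0 := by
      filter_upwards [self_mem_nhdsWithin] with s hs
      simp [slope, hs.1.out, ht]
    exact Tendsto.congr' (this.mono fun s h => h.symm) tendsto_const_nhds
  exact tendsto_nhds_unique h1 h2

lemma ae_deriv_zero_on_zero_set {f f' : ℝ → ℝ} {a b : ℝ}
    (hf : ∀ t ∈ Set.Ioo a b, HasDerivAt f (f' t) t) :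
    ∀ᵐ t ∂(volume : Measure ℝ), t ∈ Set.Ioo a b → f t = 0 → f' t = 0 := by
  set E : Set ℝ := {s | f s = 0}
  have hcnt := countable_non_accPt E
  have hnull : (volume : Measure ℝ) {t ∈ E | ¬ AccPt t (𝓟 E)} = 0 :=
    hcnt.measure_zero _
  rw [ae_iff]
  refine measure_mono_null ?_ hnull
  intro t ht
  simp only [Set.mem_setOf_eq, not_forall] at ht
  obtain ⟨htab, htE, htd⟩ := ht
  refine ⟨htE, fun hacc => htd ?_⟩
  exact deriv_zero_of_accPt (hf t htab) htE hacc

lemma hasDerivAt_abs_zero {f : ℝ → ℝ} {t : ℝ} (hf : HasDerivAt f 0 t)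
    (ht : f t = 0) : HasDerivAt (fun s => |f s|) 0 t := by
  rw [hasDerivAt_iff_isLittleO] at hf ⊢
  simp only [ht, abs_zero, smul_zero, sub_zero] at hf ⊢
  calc (fun s => |f s|) = fun s => ‖f s‖ := by simp [Real.norm_eq_abs]
  _ =o[𝓝 t] _ := Asymptotics.isLittleO_norm_left.mpr hf

lemma real_sign_eq_signType {r : ℝ} (hr : r ≠ 0) : (SignType.sign r : ℝ) = Real.sign r := by
  rcases hr.lt_or_gt with h | h
  · simp [Real.sign_of_neg h, sign_neg h]
  · simp [Real.sign_of_pos h, sign_pos h]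

lemma hasDerivAt_abs_comp {f : ℝ → ℝ} {d t : ℝ} (hf : HasDerivAt f d t)
    (h : f t = 0 → d = 0) :
    HasDerivAt (fun s => |f s|) (Real.sign (f t) * d) t := by
  by_cases h0 : f t = 0
  · rw [h0, Real.sign_zero, zero_mul]
    exact hasDerivAt_abs_zero (h h0 ▸ hf) h0
  · have := (hasDerivAt_abs h0).comp t hf
    rw [real_sign_eq_signType h0] at this
    exact this

end AuxLemmas

/-- Theorem 22 (`ℓ₁` curve norm derivative formula). -/
theorem ellOne_curve_norm_derivative {n : ℕ}
    (R : Matrix (Fin n) (Fin n) ℝ) (hR : IsUnit R.det)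
    (a b : ℝ) (x x' : ℝ → Fin n → ℝ)
    (hx : ∀ t ∈ Set.Ioo a b, HasDerivAt x (x' t) t) :
    -- (i)
    (∀ᵐ t ∂(volume : Measure ℝ), t ∈ Set.Ioo a b →
      DiniUpper (fun s => ellOneNorm R (x s)) t
        = ∑ i, Real.sign (R.mulVec (x t) i) * R.mulVec (x' t) i) ∧
    -- (ii)
    (∀ᵐ t ∂(volume : Measure ℝ), t ∈ Set.Ioo a b →
      ellOneNorm R (x t) * DiniUpper (fun s => ellOneNorm R (x s)) t
        = signPairing R (x' t) (x t)) := by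
  have part1 : ∀ᵐ t ∂(volume : Measure ℝ), t ∈ Set.Ioo a b →
      DiniUpper (fun s => ellOneNorm R (x s)) t
        = ∑ i, Real.sign (R.mulVec (x t) i) * R.mulVec (x' t) i := by
    set y : Fin n → ℝ → ℝ := fun i s => R.mulVec (x s) i with hy_def
    have hy : ∀ t ∈ Set.Ioo a b, ∀ i, HasDerivAt (y i) (R.mulVec (x' t) i) t := by
      intro t ht i
      have hxi : ∀ j, HasDerivAt (fun s => x s j) (x' t j) t :=
        hasDerivAt_pi.mp (hx t ht)
      have : HasDerivAt (fun s => ∑ j, R i j * x s j) (∑ j, R i j * x' t j) t :=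
        HasDerivAt.fun_sum fun j _ => (hxi j).const_mul (R i j)
      simpa [Matrix.mulVec, dotProduct, hy_def] using this
    have hae : ∀ᵐ t ∂(volume : Measure ℝ), ∀ i, t ∈ Set.Ioo a b →
        y i t = 0 → R.mulVec (x' t) i = 0 := by
      rw [ae_all_iff]
      intro i
      exact ae_deriv_zero_on_zero_set (fun t ht => hy t ht i)
    filter_upwards [hae] with t hgood ht
    have hD : HasDerivAt (fun s => ellOneNorm R (x s))
        (∑ i, Real.sign (R.mulVec (x t) i) * R.mulVec (x' t) i) t := by
      have : HasDerivAt (fun s => ∑ i, |y i s|)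
          (∑ i, Real.sign (y i t) * R.mulVec (x' t) i) t :=
        HasDerivAt.fun_sum fun i _ => hasDerivAt_abs_comp (hy t ht i) (hgood i ht)
      simpa [ellOneNorm, hy_def] using this
    exact DiniUpper_eq_of_hasDerivAt hD
  refine ⟨part1, ?_⟩
  filter_upwards [part1] with t h ht
  rw [h ht]
  simp [signPairing, ellOneNorm]
end

section
/- For R ∈ ℝⁿˣⁿ invertible, the max pairing ⟦x,y⟧_{∞,R} := max_{i ∈ I_∞(Ry)} (Rx)ᵢ(Ry)ᵢ, where I_∞(v) = {i : |vᵢ| = ‖v‖_∞}, is a weak pairing on ℝⁿ compatible with the weighted ℓ∞ norm ‖x‖_{∞,R} = ‖Rx‖_∞; that is, it is subadditive and continuous in the first argument, satisfies ⟦αx,y⟧ = ⟦x,αy⟧ = α⟦x,y⟧ for all α ≥ 0 and ⟦−x,−y⟧ = ⟦x,y⟧, is positive definite, satisfies the Cauchy–Schwarz inequality |⟦x,y⟧| ≤ ⟦x,x⟧^{1/2}⟦y,y⟧^{1/2}, and satisfies ⟦x,x⟧ = ‖x‖_{∞,R}². -/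
open Filter Topology MeasureTheory

/-- The max pairing `⟦x,y⟧_{∞,R} = max_{i ∈ I_∞(Ry)} (Rx)ᵢ(Ry)ᵢ`, where
`I_∞(v) = {i : |vᵢ| = ‖v‖_∞}`.  Here `‖·‖` on `Fin n → ℝ` is the sup norm. -/
noncomputable def maxPairing {n : ℕ} (R : Matrix (Fin n) (Fin n) ℝ)
    (x y : Fin n → ℝ) : ℝ :=
  sSup ((fun i => R.mulVec x i * R.mulVec y i) ''
    {i | |R.mulVec y i| = ‖R.mulVec y‖})


namespace MPaux


variable {n : ℕ}

noncomputable def Q (u v : Fin n → ℝ) : ℝ :=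
  sSup ((fun i => u i * v i) '' {i | |v i| = ‖v‖})

lemma abs_le_norm (v : Fin n → ℝ) (i : Fin n) : |v i| ≤ ‖v‖ := by
  simpa [Real.norm_eq_abs] using norm_le_pi_norm v i

lemma exists_abs_eq [Nonempty (Fin n)] (v : Fin n → ℝ) : ∃ i, |v i| = ‖v‖ := by
  obtain ⟨i, -, hi⟩ := Finset.exists_max_image Finset.univ (fun i => |v i|)
    ⟨Classical.arbitrary _, Finset.mem_univ _⟩
  refine ⟨i, le_antisymm (abs_le_norm v i) ?_⟩
  rw [pi_norm_le_iff_of_nonneg (abs_nonneg _)]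
  intro j
  simpa [Real.norm_eq_abs] using hi j (Finset.mem_univ _)

lemma bdd (u v : Fin n → ℝ) :
    BddAbove ((fun i => u i * v i) '' {i | |v i| = ‖v‖}) :=
  (Set.toFinite _).bddAbove

lemma le_Q {u v : Fin n → ℝ} {i : Fin n} (hi : |v i| = ‖v‖) :
    u i * v i ≤ Q u v :=
  le_csSup (bdd u v) ⟨i, hi, rfl⟩

lemma Q_mem [Nonempty (Fin n)] (u v : Fin n → ℝ) :
    ∃ i, |v i| = ‖v‖ ∧ Q u v = u i * v i := by
  have hne : ((fun i => u i * v i) '' {i | |v i| = ‖v‖}).Nonempty := by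
    obtain ⟨i, hi⟩ := exists_abs_eq v
    exact ⟨u i * v i, ⟨i, hi, rfl⟩⟩
  obtain ⟨i, hi, hQ⟩ := hne.csSup_mem (Set.toFinite _)
  exact ⟨i, hi, hQ.symm⟩

lemma Q_self [Nonempty (Fin n)] (v : Fin n → ℝ) : Q v v = ‖v‖ ^ 2 := by
  obtain ⟨i, hi, hQ⟩ := Q_mem v v
  calc Q v v = v i * v i := hQ
    _ = |v i| ^ 2 := by rw [sq_abs]; ring
    _ = ‖v‖ ^ 2 := by rw [hi]

lemma Q_subadd [Nonempty (Fin n)] (u₁ u₂ v : Fin n → ℝ) :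
    Q (u₁ + u₂) v ≤ Q u₁ v + Q u₂ v := by
  obtain ⟨i, hi, hQ⟩ := Q_mem (u₁ + u₂) v
  rw [hQ, Pi.add_apply, add_mul]
  exact add_le_add (le_Q hi) (le_Q hi)

lemma Q_homog_left [Nonempty (Fin n)] {α : ℝ} (hα : 0 ≤ α) (u v : Fin n → ℝ) :
    Q (α • u) v = α * Q u v := by
  refine le_antisymm ?_ ?_
  · obtain ⟨i, hi, hQ⟩ := Q_mem (α • u) v
    rw [hQ, Pi.smul_apply, smul_eq_mul, mul_assoc]
    exact mul_le_mul_of_nonneg_left (le_Q hi) hα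
  · obtain ⟨j, hj, hQ⟩ := Q_mem u v
    rw [hQ, ← mul_assoc]
    exact le_Q (v := v) (u := α • u) (i := j) hj |>.trans_eq' (by simp [mul_assoc])

lemma Q_homog_right [Nonempty (Fin n)] {α : ℝ} (hα : 0 ≤ α) (u v : Fin n → ℝ) :
    Q u (α • v) = α * Q u v := by
  rcases eq_or_lt_of_le hα with h0 | h0
  · subst h0
    obtain ⟨i, hi, hQ⟩ := Q_mem u ((0:ℝ) • v)
    simp only [hQ, Pi.smul_apply, smul_eq_mul, zero_mul, mul_zero]
  · have hset : ∀ i, |(α • v) i| = ‖α • v‖ ↔ |v i| = ‖v‖ := by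
      intro i
      rw [Pi.smul_apply, smul_eq_mul, abs_mul, norm_smul, Real.norm_eq_abs,
        abs_of_pos h0]
      exact mul_right_inj' h0.ne'
    refine le_antisymm ?_ ?_
    · obtain ⟨i, hi, hQ⟩ := Q_mem u (α • v)
      have hi' := (hset i).mp hi
      rw [hQ, Pi.smul_apply, smul_eq_mul]
      calc u i * (α * v i) = α * (u i * v i) := by ring
        _ ≤ α * Q u v := mul_le_mul_of_nonneg_left (le_Q hi') hα
    · obtain ⟨j, hj, hQ⟩ := Q_mem u v
      rw [hQ]
      have hj' : |(α • v) j| = ‖α • v‖ := (hset j).mpr hj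
      calc α * (u j * v j) = u j * (α • v) j := by simp; ring
        _ ≤ Q u (α • v) := le_Q hj'

lemma Q_neg_neg (u v : Fin n → ℝ) : Q (-u) (-v) = Q u v := by
  unfold Q
  simp only [Pi.neg_apply, abs_neg, norm_neg, neg_mul_neg]

lemma abs_Q_le [Nonempty (Fin n)] (u v : Fin n → ℝ) : |Q u v| ≤ ‖u‖ * ‖v‖ := by
  obtain ⟨i, hi, hQ⟩ := Q_mem u v
  rw [hQ, abs_mul]
  exact mul_le_mul (abs_le_norm u i) (abs_le_norm v i) (abs_nonneg _) (norm_nonneg _)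

lemma Q_lip [Nonempty (Fin n)] (u u' v : Fin n → ℝ) :
    Q u v ≤ Q u' v + ‖u - u'‖ * ‖v‖ := by
  obtain ⟨i, hi, hQ⟩ := Q_mem u v
  have h1 : u i * v i = u' i * v i + (u - u') i * v i := by
    simp only [Pi.sub_apply]; ring
  rw [hQ, h1]
  refine add_le_add (le_Q hi) ?_
  calc (u - u') i * v i ≤ |(u - u') i * v i| := le_abs_self _
    _ = |(u - u') i| * |v i| := abs_mul _ _
    _ ≤ ‖u - u'‖ * ‖v‖ :=
      mul_le_mul (abs_le_norm _ i) (abs_le_norm v i) (abs_nonneg _) (norm_nonneg _)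

lemma Q_cont [Nonempty (Fin n)] (v : Fin n → ℝ) : Continuous fun u => Q u v := by
  have : LipschitzWith ‖v‖₊ fun u => Q u v := by
    refine LipschitzWith.of_dist_le_mul fun u u' => ?_
    rw [Real.dist_eq, dist_eq_norm, coe_nnnorm, abs_sub_le_iff]
    have hc : ‖u - u'‖ * ‖v‖ = ‖v‖ * ‖u - u'‖ := mul_comm _ _
    have h2 : ‖u' - u‖ = ‖u - u'‖ := norm_sub_rev _ _
    constructor
    · have := Q_lip u u' v; linarith
    · have := Q_lip u' u v; rw [h2, hc] at this; linarith
  exact this.continuous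

lemma mulVec_cont (R : Matrix (Fin n) (Fin n) ℝ) : Continuous fun x : Fin n → ℝ => R.mulVec x := by
  refine continuous_pi fun i => ?_
  simp only [Matrix.mulVec, dotProduct]
  exact continuous_finset_sum _ fun j _ => continuous_const.mul (continuous_apply j)

end MPaux

namespace MPaux

lemma maxPairing_eq {n : ℕ} (R : Matrix (Fin n) (Fin n) ℝ) (x y : Fin n → ℝ) :
    maxPairing R x y = Q (R.mulVec x) (R.mulVec y) := rfl

end MPaux

/-- Lemma 24: the max pairing is a weak pairing compatible with the weighted
`ℓ∞` norm `‖x‖_{∞,R} = ‖Rx‖_∞`. -/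
theorem maxPairing_is_weak_pairing {n : ℕ}
    (R : Matrix (Fin n) (Fin n) ℝ) (hR : IsUnit R.det) :
    -- subadditivity and continuity in the first argument
    (∀ x₁ x₂ y : Fin n → ℝ,
      maxPairing R (x₁ + x₂) y ≤ maxPairing R x₁ y + maxPairing R x₂ y) ∧
    (∀ y : Fin n → ℝ, Continuous fun x => maxPairing R x y) ∧
    -- weak homogeneity
    (∀ (α : ℝ), 0 ≤ α → ∀ x y : Fin n → ℝ,
      maxPairing R (α • x) y = α * maxPairing R x y) ∧
    (∀ (α : ℝ), 0 ≤ α → ∀ x y : Fin n → ℝ,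
      maxPairing R x (α • y) = α * maxPairing R x y) ∧
    (∀ x y : Fin n → ℝ, maxPairing R (-x) (-y) = maxPairing R x y) ∧
    -- positive definiteness
    (∀ x : Fin n → ℝ, x ≠ 0 → 0 < maxPairing R x x) ∧
    -- Cauchy–Schwarz inequality
    (∀ x y : Fin n → ℝ, |maxPairing R x y|
      ≤ Real.sqrt (maxPairing R x x) * Real.sqrt (maxPairing R y y)) ∧
    -- compatibility with the weighted `ℓ∞` norm
    (∀ x : Fin n → ℝ, maxPairing R x x = ‖R.mulVec x‖ ^ 2) := by
  open MPaux in
  rcases isEmpty_or_nonempty (Fin n) with hE | hN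
  · have hQ0 : ∀ x y : Fin n → ℝ, maxPairing R x y = 0 := by
      intro x y
      have h : {i : Fin n | |R.mulVec y i| = ‖R.mulVec y‖} = ∅ :=
        Set.eq_empty_of_isEmpty _
      simp [maxPairing, h, Real.sSup_empty]
    have hv0 : ∀ x : Fin n → ℝ, R.mulVec x = 0 := fun x => Subsingleton.elim _ _
    refine ⟨fun x₁ x₂ y => by simp [hQ0], fun y => by simp only [hQ0]; exact continuous_const,
      fun α hα x y => by simp [hQ0], fun α hα x y => by simp [hQ0],
      fun x y => by simp [hQ0], fun x hx => absurd (Subsingleton.elim x 0) hx,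
      fun x y => by simp [hQ0], fun x => by simp [hQ0, hv0]⟩
  · have hinj : ∀ x : Fin n → ℝ, x ≠ 0 → R.mulVec x ≠ 0 := by
      intro x hx h
      apply hx
      have : (R⁻¹).mulVec (R.mulVec x) = x := by
        rw [Matrix.mulVec_mulVec, Matrix.nonsing_inv_mul R hR, Matrix.one_mulVec]
      rw [← this, h, Matrix.mulVec_zero]
    refine ⟨?_, ?_, ?_, ?_, ?_, ?_, ?_, ?_⟩
    · intro x₁ x₂ y
      simp only [maxPairing_eq, Matrix.mulVec_add]
      exact Q_subadd _ _ _
    · intro y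
      simp only [maxPairing_eq]
      exact (Q_cont (R.mulVec y)).comp (mulVec_cont R)
    · intro α hα x y
      simp only [maxPairing_eq, Matrix.mulVec_smul]
      exact Q_homog_left hα _ _
    · intro α hα x y
      simp only [maxPairing_eq, Matrix.mulVec_smul]
      exact Q_homog_right hα _ _
    · intro x y
      simp only [maxPairing_eq, Matrix.mulVec_neg]
      exact Q_neg_neg _ _
    · intro x hx
      rw [maxPairing_eq, Q_self]
      exact pow_pos (norm_pos_iff.mpr (hinj x hx)) 2
    · intro x y
      simp only [maxPairing_eq, Q_self, Real.sqrt_sq (norm_nonneg _)]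
      exact abs_Q_le _ _
    · intro x
      rw [maxPairing_eq, Q_self]
end
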